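/- arXiv:2506.13061 — 3 statements merged into one kernel-verified Lean document; each statement's English description precedes it below -/
import Mathlib

section
/- Let the stages k̃_1, …, k̃_s be defined recursively by k̃_1(x) = V̂_{t+c_1H}(x) and k̃_j(x) = V̂_{t+c_jH}(x + H Σ_{k<j} a_{jk} k̃_k(x)), where each field V̂_u is C² with ‖∇V̂_u(x)‖_∞ ≤ K̃⁽¹⁾ and ‖∇²V̂_u(x)‖_∞ ≤ K̃⁽²⁾ for all x, and max|a_{jk}| ≤ A_p, max|b_j| ≤ B_p. Then for all x ∈ ℝ^d: Σ_{i=1}^s ‖∇k̃_i(x)‖_∞ ≤ s K̃⁽¹⁾ (1 + K̃⁽¹⁾ A_p H d)^{s−1} and Σ_{i=1}^s ‖∇²k̃_i(x)‖_∞ ≤ 2 K̃⁽²⁾ s³ (1 + K̃⁽¹⁾ A_p H d)^{2s}. Consequently, φ̃_H(x) := x + H Σ_j b_j k̃_j(x) satisfies sup_x ‖∇²φ̃_H(x)‖_∞ ≤ 2 H B_p K̃⁽²⁾ s³ (1 + K̃⁽¹⁾ A_p H d)^{2s}. Moreover, if K̃⁽¹⁾ A_p H d s 2^s ≤ 1,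 then ‖∇k̃_i(x)‖_∞ ≤ 2 K̃⁽¹⁾ for every i ∈ {1,…,s}. The same statements hold for stages k̄_i built from fields V_u with ‖∇V_u‖_∞ ≤ K̄⁽¹⁾ and ‖∇²V_u‖_∞ ≤ K̄⁽²⁾, with K̄ in place of K̃. -/
/-- Euclidean space ℝ^d. -/
abbrev E (d : ℕ) := EuclideanSpace ℝ (Fin d)

/-- Entry `(l,q)` of the Jacobian of `F` at `x`, i.e. `∂_l F^{(q)}(x)`. -/
noncomputable def jacEntry {d : ℕ} (F : E d → E d) (x : E d) (l q : Fin d) : ℝ :=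
  fderiv ℝ F x (EuclideanSpace.single l 1) q

/-- Entry `(l,r,q)` of the second derivative of `F` at `x`, i.e. `∂²_{lr} F^{(q)}(x)`. -/
noncomputable def jac2Entry {d : ℕ} (F : E d → E d) (x : E d) (l r q : Fin d) : ℝ :=
  fderiv ℝ (fun y => jacEntry F y l q) x (EuclideanSpace.single r 1)

/-- `‖∇F(x)‖_∞`: the maximum entry of the Jacobian of `F` at `x`. -/
noncomputable def jacSup {d : ℕ} (F : E d → E d) (x : E d) : ℝ :=
  ⨆ l, ⨆ q, |jacEntry F x l q|

/-- `‖∇²F(x)‖_∞`: the maximum entry of the second derivative of `F` at `x`. -/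
noncomputable def jac2Sup {d : ℕ} (F : E d → E d) (x : E d) : ℝ :=
  ⨆ l, ⨆ r, ⨆ q, |jac2Entry F x l r q|

/-- The recursively defined Runge–Kutta stages:
`k_0(x) = V_0(x)`, `k_j(x) = V_j(x + H Σ_{k<j} a_{jk} k_k(x))`. -/
noncomputable def rkStage {d : ℕ} (V : ℕ → E d → E d) (a : ℕ → ℕ → ℝ) (H : ℝ) :
    ℕ → E d → E d
  | j => fun x => V j (x + H • ∑ k : Fin j, a j k • rkStage V a H k x)
termination_by j => j
decreasing_by exact k.isLt

/-!
Write `k_j = V_j ∘ Y_j` with the stage value `Y_j(x) = x + H Σ_{k<j} a_{jk} k_k(x)` and put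
`c = K₁ A_p H d`. By the chain rule every entry of `∇k_j` is at most `K₁` times a row sum of
`∇Y_j`, and such a row sum is at most `1 + H A_p d Σ_{k<j} ‖∇k_k‖_∞`. Strong induction then gives
`‖∇k_j‖_∞ ≤ K₁ (1 + c)^j`, the geometric sum `c Σ_{k<j} (1 + c)^k = (1 + c)^j - 1` telescoping.
The second-order chain rule gives `‖∇²k_j‖_∞ ≤ c Σ_{k<j} ‖∇²k_k‖_∞ + K₂ (1 + c)^{2j}`, whence
`Σ_{k<j} ‖∇²k_k‖_∞ ≤ K₂ j (1 + c)^{2j}`. If `c s 2^s ≤ 1`, convexity of `t ↦ t^s` on `[1, 2]`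
gives `(1 + c)^s ≤ 1 + (2^s - 1) c ≤ 2`.
-/

open Finset

section Calculus

variable {d : ℕ} {F g : E d → E d} {x : E d}

lemma map_eq_sum_smul_single {M : Type*} [AddCommGroup M] [Module ℝ M] [TopologicalSpace M]
    (L : E d →L[ℝ] M) (v : E d) :
    L v = ∑ m, v m • L (EuclideanSpace.single m 1) := by
  conv_lhs => rw [← (EuclideanSpace.basisFun (Fin d) ℝ).sum_repr v]
  simp [map_sum, map_smul]

lemma abs_jacEntry_le_jacSup (l q : Fin d) : |jacEntry F x l q| ≤ jacSup F x :=
  (le_ciSup (Set.finite_range _).bddAbove q).trans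
    (le_ciSup (f := fun l => ⨆ q, |jacEntry F x l q|) (Set.finite_range _).bddAbove l)

lemma abs_jac2Entry_le_jac2Sup (l r q : Fin d) : |jac2Entry F x l r q| ≤ jac2Sup F x :=
  ((le_ciSup (Set.finite_range _).bddAbove q).trans
    (le_ciSup (f := fun r => ⨆ q, |jac2Entry F x l r q|) (Set.finite_range _).bddAbove r)).trans
    (le_ciSup (f := fun l => ⨆ r, ⨆ q, |jac2Entry F x l r q|) (Set.finite_range _).bddAbove l)

-- For `d = 0` the suprema range over an empty index set and equal `0`, hence `hC`.
lemma jacSup_le {C : ℝ} (hC : 0 ≤ C) (h : ∀ l q, |jacEntry F x l q| ≤ C) : jacSup F x ≤ C :=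
  Real.iSup_le (fun l => Real.iSup_le (h l) hC) hC

lemma jac2Sup_le {C : ℝ} (hC : 0 ≤ C) (h : ∀ l r q, |jac2Entry F x l r q| ≤ C) :
    jac2Sup F x ≤ C :=
  Real.iSup_le (fun l => Real.iSup_le (fun r => Real.iSup_le (h l r) hC) hC) hC

lemma jacSup_nonneg : 0 ≤ jacSup F x :=
  Real.iSup_nonneg fun _ => Real.iSup_nonneg fun _ => abs_nonneg _

lemma jac2Sup_nonneg : 0 ≤ jac2Sup F x :=
  Real.iSup_nonneg fun _ => Real.iSup_nonneg fun _ => Real.iSup_nonneg fun _ => abs_nonneg _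

lemma differentiable_jacEntry (hF : ContDiff ℝ 2 F) (l q : Fin d) :
    Differentiable ℝ (fun y => jacEntry F y l q) :=
  show Differentiable ℝ ((EuclideanSpace.proj q).comp
      (ContinuousLinearMap.apply ℝ (E d) (EuclideanSpace.single l 1)) ∘ fderiv ℝ F) from
  ((EuclideanSpace.proj q).comp
      (ContinuousLinearMap.apply ℝ (E d) (EuclideanSpace.single l 1))).differentiable.comp
    ((hF.fderiv_right (m := 1) le_rfl).differentiable one_ne_zero)

lemma jacEntry_comp (hg : DifferentiableAt ℝ g x) (hF : DifferentiableAt ℝ F (g x))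
    (l q : Fin d) :
    jacEntry (F ∘ g) x l q = ∑ m, jacEntry g x l m * jacEntry F (g x) m q := by
  unfold jacEntry
  rw [fderiv_comp x hF hg, ContinuousLinearMap.comp_apply,
    map_eq_sum_smul_single (fderiv ℝ F (g x))]
  simp

lemma jac2Entry_comp (hg : ContDiff ℝ 2 g) (hF : ContDiff ℝ 2 F) (l r q : Fin d) :
    jac2Entry (F ∘ g) x l r q
      = ∑ m, (jac2Entry g x l r m * jacEntry F (g x) m q
          + jacEntry g x l m * ∑ n, jacEntry g x r n * jac2Entry F (g x) m n q) := by
  have hgd : Differentiable ℝ g := hg.differentiable two_ne_zero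
  have hFd : Differentiable ℝ F := hF.differentiable two_ne_zero
  have hu (m : Fin d) : DifferentiableAt ℝ (fun y => jacEntry g y l m) x :=
    differentiable_jacEntry hg l m x
  have hv (m : Fin d) : DifferentiableAt ℝ (fun y => jacEntry F (g y) m q) x :=
    (differentiable_jacEntry hF m q (g x)).comp x (hgd x)
  have hchain (m : Fin d) :
      fderiv ℝ (fun y => jacEntry F (g y) m q) x (EuclideanSpace.single r 1)
        = ∑ n, jacEntry g x r n * jac2Entry F (g x) m n q := by
    rw [fderiv_fun_comp x (differentiable_jacEntry hF m q (g x)) (hgd x),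
      ContinuousLinearMap.comp_apply, map_eq_sum_smul_single]
    rfl
  have hfirst : (fun y => jacEntry (F ∘ g) y l q)
      = fun y => ∑ m, jacEntry g y l m * jacEntry F (g y) m q :=
    funext fun y => jacEntry_comp (hgd y) (hFd (g y)) l q
  rw [jac2Entry, hfirst,
    fderiv_fun_sum (A := fun m y => jacEntry g y l m * jacEntry F (g y) m q)
      fun m _ => (hu m).mul (hv m),
    _root_.sum_apply]
  refine Finset.sum_congr rfl fun m _ => ?_
  rw [fderiv_fun_mul (hu m) (hv m), _root_.add_apply, _root_.smul_apply, _root_.smul_apply,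
    hchain, smul_eq_mul, smul_eq_mul, add_comm, mul_comm]
  rfl

lemma abs_jacEntry_comp_le (hg : DifferentiableAt ℝ g x) (hF : DifferentiableAt ℝ F (g x))
    (l q : Fin d) :
    |jacEntry (F ∘ g) x l q| ≤ (∑ m, |jacEntry g x l m|) * jacSup F (g x) := by
  rw [jacEntry_comp hg hF, Finset.sum_mul]
  refine (abs_sum_le_sum_abs _ _).trans (Finset.sum_le_sum fun m _ => ?_)
  rw [abs_mul]
  exact mul_le_mul_of_nonneg_left (abs_jacEntry_le_jacSup m q) (abs_nonneg _)

lemma abs_jac2Entry_comp_le (hg : ContDiff ℝ 2 g) (hF : ContDiff ℝ 2 F) (l r q : Fin d) :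
    |jac2Entry (F ∘ g) x l r q|
      ≤ (∑ m, |jac2Entry g x l r m|) * jacSup F (g x)
        + (∑ m, |jacEntry g x l m|) * (∑ n, |jacEntry g x r n|) * jac2Sup F (g x) := by
  have hinner (m : Fin d) :
      |∑ n, jacEntry g x r n * jac2Entry F (g x) m n q|
        ≤ (∑ n, |jacEntry g x r n|) * jac2Sup F (g x) := by
    rw [Finset.sum_mul]
    refine (abs_sum_le_sum_abs _ _).trans (Finset.sum_le_sum fun n _ => ?_)
    rw [abs_mul]
    exact mul_le_mul_of_nonneg_left (abs_jac2Entry_le_jac2Sup m n q) (abs_nonneg _)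
  rw [jac2Entry_comp hg hF, Finset.sum_mul, Finset.sum_mul, Finset.sum_mul, ← sum_add_distrib]
  refine (abs_sum_le_sum_abs _ _).trans (Finset.sum_le_sum fun m _ => ?_)
  refine (abs_add_le _ _).trans (add_le_add ?_ ?_) <;> rw [abs_mul]
  · exact mul_le_mul_of_nonneg_left (abs_jacEntry_le_jacSup m q) (abs_nonneg _)
  · rw [mul_assoc]
    exact mul_le_mul_of_nonneg_left (hinner m) (abs_nonneg _)

end Calculus

section AffineCombination

variable {d : ℕ} {x : E d} {n : ℕ} {H C : ℝ} {c : ℕ → ℝ} {f : ℕ → E d → E d}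

lemma jacEntry_add_smul_sum (hf : ∀ k ∈ range n, DifferentiableAt ℝ (f k) x) (l m : Fin d) :
    jacEntry (fun y => y + H • ∑ k ∈ range n, c k • f k y) x l m
      = EuclideanSpace.single l (1 : ℝ) m + H * ∑ k ∈ range n, c k * jacEntry (f k) x l m := by
  have hsum : HasFDerivAt (fun y => ∑ k ∈ range n, c k • f k y)
      (∑ k ∈ range n, c k • fderiv ℝ (f k) x) x :=
    HasFDerivAt.fun_sum fun k hk => (hf k hk).hasFDerivAt.const_smul (c k)
  have hmap : HasFDerivAt (fun y => y + H • ∑ k ∈ range n, c k • f k y)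
      (ContinuousLinearMap.id ℝ (E d) + H • ∑ k ∈ range n, c k • fderiv ℝ (f k) x) x :=
    (hasFDerivAt_id x).add (hsum.const_smul H)
  rw [jacEntry, hmap.fderiv]
  simp [Finset.mul_sum, jacEntry]

lemma jac2Entry_add_smul_sum (hf : ∀ k ∈ range n, ContDiff ℝ 2 (f k)) (l r m : Fin d) :
    jac2Entry (fun y => y + H • ∑ k ∈ range n, c k • f k y) x l r m
      = H * ∑ k ∈ range n, c k * jac2Entry (f k) x l r m := by
  have hfirst : (fun y => jacEntry (fun z => z + H • ∑ k ∈ range n, c k • f k z) y l m)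
      = fun y => EuclideanSpace.single l (1 : ℝ) m
          + H * ∑ k ∈ range n, c k * jacEntry (f k) y l m :=
    funext fun y => jacEntry_add_smul_sum
      (fun k hk => ((hf k hk).differentiable two_ne_zero).differentiableAt) l m
  have hsum : HasFDerivAt (fun y => ∑ k ∈ range n, c k * jacEntry (f k) y l m)
      (∑ k ∈ range n, c k • fderiv ℝ (fun y => jacEntry (f k) y l m) x) x :=
    HasFDerivAt.fun_sum fun k hk =>
      (differentiable_jacEntry (hf k hk) l m x).hasFDerivAt.const_mul (c k)
  rw [jac2Entry, hfirst, ((hsum.const_mul H).const_add _).fderiv]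
  simp [jac2Entry]

lemma sum_abs_jacEntry_add_smul_sum_le (hH : 0 ≤ H) (hc : ∀ k, |c k| ≤ C)
    (hf : ∀ k ∈ range n, DifferentiableAt ℝ (f k) x) (l : Fin d) :
    ∑ m, |jacEntry (fun y => y + H • ∑ k ∈ range n, c k • f k y) x l m|
      ≤ 1 + H * C * d * ∑ k ∈ range n, jacSup (f k) x := by
  have hentry (m : Fin d) : |H * ∑ k ∈ range n, c k * jacEntry (f k) x l m|
      ≤ H * C * ∑ k ∈ range n, jacSup (f k) x := by
    rw [abs_mul, abs_of_nonneg hH, mul_assoc, Finset.mul_sum]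
    refine mul_le_mul_of_nonneg_left ((abs_sum_le_sum_abs _ _).trans
      (Finset.sum_le_sum fun k _ => ?_)) hH
    rw [abs_mul]
    exact mul_le_mul (hc k) (abs_jacEntry_le_jacSup l m) (abs_nonneg _)
      ((abs_nonneg _).trans (hc k))
  calc ∑ m, |jacEntry (fun y => y + H • ∑ k ∈ range n, c k • f k y) x l m|
      ≤ ∑ m, (|EuclideanSpace.single l (1 : ℝ) m|
          + H * C * ∑ k ∈ range n, jacSup (f k) x) :=
        Finset.sum_le_sum fun m _ => by
          rw [jacEntry_add_smul_sum hf]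
          exact (abs_add_le _ _).trans (add_le_add_right (hentry m) _)
    _ = 1 + H * C * d * ∑ k ∈ range n, jacSup (f k) x := by
        simp only [PiLp.single_apply, apply_ite abs, abs_one, abs_zero, sum_add_distrib,
          sum_ite_eq', mem_univ, ↓reduceIte, sum_const, card_univ, Fintype.card_fin, nsmul_eq_mul]
        ring

lemma abs_jac2Entry_add_smul_sum_le (hH : 0 ≤ H) (hc : ∀ k, |c k| ≤ C)
    (hf : ∀ k ∈ range n, ContDiff ℝ 2 (f k)) (l r m : Fin d) :
    |jac2Entry (fun y => y + H • ∑ k ∈ range n, c k • f k y) x l r m|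
      ≤ H * C * ∑ k ∈ range n, jac2Sup (f k) x := by
  rw [jac2Entry_add_smul_sum hf, abs_mul, abs_of_nonneg hH, mul_assoc, Finset.mul_sum]
  refine mul_le_mul_of_nonneg_left ((abs_sum_le_sum_abs _ _).trans
    (Finset.sum_le_sum fun k _ => ?_)) hH
  rw [abs_mul]
  exact mul_le_mul (hc k) (abs_jac2Entry_le_jac2Sup l r m) (abs_nonneg _)
    ((abs_nonneg _).trans (hc k))

lemma jac2Sup_add_smul_sum_le (hH : 0 ≤ H) (hc : ∀ k, |c k| ≤ C)
    (hf : ∀ k ∈ range n, ContDiff ℝ 2 (f k)) :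
    jac2Sup (fun y => y + H • ∑ k ∈ range n, c k • f k y) x
      ≤ H * C * ∑ k ∈ range n, jac2Sup (f k) x :=
  jac2Sup_le (mul_nonneg (mul_nonneg hH ((abs_nonneg _).trans (hc 0)))
      (Finset.sum_nonneg fun _ _ => jac2Sup_nonneg))
    (abs_jac2Entry_add_smul_sum_le hH hc hf)

end AffineCombination

section Stages

variable {d s : ℕ} {H Ap K1 K2 : ℝ} {V : ℕ → E d → E d} {a : ℕ → ℕ → ℝ}

noncomputable def rkStageValue (V : ℕ → E d → E d) (a : ℕ → ℕ → ℝ) (H : ℝ) (j : ℕ)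
    (x : E d) : E d :=
  x + H • ∑ k ∈ range j, a j k • rkStage V a H k x

lemma rkStage_eq_comp (V : ℕ → E d → E d) (a : ℕ → ℕ → ℝ) (H : ℝ) (j : ℕ) :
    rkStage V a H j = V j ∘ rkStageValue V a H j := by
  rw [rkStage]
  funext x
  rw [Function.comp_apply, rkStageValue,
    Fin.sum_univ_eq_sum_range (fun k => a j k • rkStage V a H k x) j]

lemma contDiff_rkStageValue {j : ℕ} (h : ∀ k < j, ContDiff ℝ 2 (rkStage V a H k)) :
    ContDiff ℝ 2 (rkStageValue V a H j) :=
  contDiff_id.add <| ContDiff.const_smul H <|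
    ContDiff.sum fun k hk => (h k (mem_range.mp hk)).const_smul _

lemma contDiff_rkStage (hV : ∀ i < s, ContDiff ℝ 2 (V i)) :
    ∀ j < s, ContDiff ℝ 2 (rkStage V a H j) := by
  intro j
  induction j using Nat.strong_induction_on with
  | _ j ih =>
    intro hj
    rw [rkStage_eq_comp]
    exact (hV j hj).comp (contDiff_rkStageValue fun k hk => ih k hk (hk.trans hj))

lemma sum_abs_jacEntry_rkStageValue_le (hH : 0 ≤ H) (ha : ∀ j k, |a j k| ≤ Ap) {j : ℕ}
    (hst : ∀ k < j, ContDiff ℝ 2 (rkStage V a H k)) {x : E d}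
    (hprev : ∀ k < j, jacSup (rkStage V a H k) x ≤ K1 * (1 + K1 * Ap * H * d) ^ k)
    (l : Fin d) :
    ∑ m, |jacEntry (rkStageValue V a H j) x l m| ≤ (1 + K1 * Ap * H * d) ^ j := by
  set c := K1 * Ap * H * d
  have hAp : 0 ≤ Ap := (abs_nonneg _).trans (ha 0 0)
  have hgeom : H * Ap * d * ∑ k ∈ range j, K1 * (1 + c) ^ k
      = (∑ k ∈ range j, (1 + c) ^ k) * ((1 + c) - 1) := by
    rw [Finset.mul_sum, Finset.sum_mul]
    exact Finset.sum_congr rfl fun k _ => by ring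
  calc ∑ m, |jacEntry (rkStageValue V a H j) x l m|
      ≤ 1 + H * Ap * d * ∑ k ∈ range j, jacSup (rkStage V a H k) x :=
        sum_abs_jacEntry_add_smul_sum_le hH (ha j) (fun k hk =>
          ((hst k (mem_range.mp hk)).differentiable two_ne_zero).differentiableAt) l
    _ ≤ 1 + H * Ap * d * ∑ k ∈ range j, K1 * (1 + c) ^ k := by
        gcongr with k hk
        exact hprev k (mem_range.mp hk)
    _ = (1 + c) ^ j := by rw [hgeom, geom_sum_mul]; ring

lemma jacSup_rkStage_le (hH : 0 ≤ H) (ha : ∀ j k, |a j k| ≤ Ap) (hK1 : 0 ≤ K1)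
    (hV : ∀ i < s, ContDiff ℝ 2 (V i)) (hV1 : ∀ i < s, ∀ x, jacSup (V i) x ≤ K1) :
    ∀ j < s, ∀ x, jacSup (rkStage V a H j) x ≤ K1 * (1 + K1 * Ap * H * d) ^ j := by
  have hAp : 0 ≤ Ap := (abs_nonneg _).trans (ha 0 0)
  intro j
  induction j using Nat.strong_induction_on with
  | _ j ih =>
    intro hj x
    have hst (k : ℕ) (hk : k < j) : ContDiff ℝ 2 (rkStage V a H k) :=
      contDiff_rkStage hV k (hk.trans hj)
    refine jacSup_le (by positivity) fun l q => ?_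
    rw [rkStage_eq_comp]
    calc |jacEntry (V j ∘ rkStageValue V a H j) x l q|
        ≤ (∑ m, |jacEntry (rkStageValue V a H j) x l m|)
            * jacSup (V j) (rkStageValue V a H j x) :=
          abs_jacEntry_comp_le ((contDiff_rkStageValue hst).differentiable two_ne_zero x)
            ((hV j hj).differentiable two_ne_zero _) l q
      _ ≤ (1 + K1 * Ap * H * d) ^ j * K1 := by
          gcongr
          · exact jacSup_nonneg
          · exact sum_abs_jacEntry_rkStageValue_le hH ha hst
              (fun k hk => ih k hk (hk.trans hj) x) l
          · exact hV1 j hj _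
      _ = K1 * (1 + K1 * Ap * H * d) ^ j := mul_comm _ _

lemma jac2Sup_rkStage_le (hH : 0 ≤ H) (ha : ∀ j k, |a j k| ≤ Ap) (hK1 : 0 ≤ K1)
    (hK2 : 0 ≤ K2) (hV : ∀ i < s, ContDiff ℝ 2 (V i))
    (hV1 : ∀ i < s, ∀ x, jacSup (V i) x ≤ K1) (hV2 : ∀ i < s, ∀ x, jac2Sup (V i) x ≤ K2)
    {j : ℕ} (hj : j < s) (x : E d) :
    jac2Sup (rkStage V a H j) x
      ≤ K1 * Ap * H * d * ∑ k ∈ range j, jac2Sup (rkStage V a H k) x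
        + K2 * (1 + K1 * Ap * H * d) ^ (2 * j) := by
  set S := ∑ k ∈ range j, jac2Sup (rkStage V a H k) x
  have hAp : 0 ≤ Ap := (abs_nonneg _).trans (ha 0 0)
  have hS : 0 ≤ S := Finset.sum_nonneg fun _ _ => jac2Sup_nonneg
  have hst (k : ℕ) (hk : k < j) : ContDiff ℝ 2 (rkStage V a H k) :=
    contDiff_rkStage hV k (hk.trans hj)
  have hrow (l : Fin d) : ∑ m, |jacEntry (rkStageValue V a H j) x l m|
      ≤ (1 + K1 * Ap * H * d) ^ j :=
    sum_abs_jacEntry_rkStageValue_le hH ha hst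
      (fun k hk => jacSup_rkStage_le hH ha hK1 hV hV1 k (hk.trans hj) x) l
  have hrow2 (l r : Fin d) :
      ∑ m, |jac2Entry (rkStageValue V a H j) x l r m| ≤ d * (H * Ap * S) :=
    (Finset.sum_le_card_nsmul _ _ _ fun m _ => abs_jac2Entry_add_smul_sum_le hH (ha j)
      (fun k hk => hst k (mem_range.mp hk)) l r m).trans (by simp [S])
  refine jac2Sup_le (by positivity) fun l r q => ?_
  rw [rkStage_eq_comp]
  refine (abs_jac2Entry_comp_le (contDiff_rkStageValue hst) (hV j hj) l r q).trans ?_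
  calc _ ≤ d * (H * Ap * S) * K1
          + (1 + K1 * Ap * H * d) ^ j * (1 + K1 * Ap * H * d) ^ j * K2 := by
        gcongr
        · exact jacSup_nonneg
        · exact hrow2 l r
        · exact hV1 j hj _
        · exact jac2Sup_nonneg
        · exact hrow l
        · exact hrow r
        · exact hV2 j hj _
    _ = K1 * Ap * H * d * S + K2 * (1 + K1 * Ap * H * d) ^ (2 * j) := by ring

lemma sum_jac2Sup_rkStage_le (hH : 0 ≤ H) (ha : ∀ j k, |a j k| ≤ Ap) (hK1 : 0 ≤ K1)
    (hK2 : 0 ≤ K2) (hV : ∀ i < s, ContDiff ℝ 2 (V i))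
    (hV1 : ∀ i < s, ∀ x, jacSup (V i) x ≤ K1) (hV2 : ∀ i < s, ∀ x, jac2Sup (V i) x ≤ K2)
    (x : E d) :
    ∀ j ≤ s, ∑ k ∈ range j, jac2Sup (rkStage V a H k) x
      ≤ K2 * j * (1 + K1 * Ap * H * d) ^ (2 * j) := by
  set c := K1 * Ap * H * d
  have hc : 0 ≤ c := by have := (abs_nonneg _).trans (ha 0 0); positivity
  intro j
  induction j with
  | zero => simp
  | succ j ih =>
    intro hj
    have hS := ih (by omega)
    have hT := jac2Sup_rkStage_le hH ha hK1 hK2 hV hV1 hV2 (a := a) hj x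
    have hX : 0 ≤ K2 * (1 + c) ^ (2 * j) := by positivity
    rw [sum_range_succ]
    calc _ ≤ (1 + c) * ∑ k ∈ range j, jac2Sup (rkStage V a H k) x
          + K2 * (1 + c) ^ (2 * j) := by linarith
      _ ≤ (1 + c) * (K2 * j * (1 + c) ^ (2 * j)) + K2 * (1 + c) ^ (2 * j) := by gcongr
      _ = K2 * (1 + c) ^ (2 * j) * ((1 + c) * j + 1) := by ring
      _ ≤ K2 * (1 + c) ^ (2 * j) * ((1 + c) ^ 2 * (j + 1)) := by
          gcongr
          have hcj : 0 ≤ c * j := mul_nonneg hc j.cast_nonneg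
          nlinarith [mul_nonneg hc hcj]
      _ = K2 * ↑(j + 1) * (1 + c) ^ (2 * (j + 1)) := by push_cast; ring

lemma one_add_pow_le {c : ℝ} (hc0 : 0 ≤ c) (hc1 : c ≤ 1) (n : ℕ) :
    (1 + c) ^ n ≤ 1 - c + c * 2 ^ n := by
  have hconv := (convexOn_pow n).2 (Set.mem_Ici.2 zero_le_one) (Set.mem_Ici.2 zero_le_two)
    (sub_nonneg.2 hc1) hc0 (sub_add_cancel 1 c)
  simp only [smul_eq_mul, one_pow, mul_one] at hconv
  rwa [show (1 - c) + c * 2 = 1 + c by ring] at hconv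

lemma jacSup_rkStage_le_two_mul (hH : 0 ≤ H) (ha : ∀ j k, |a j k| ≤ Ap) (hK1 : 0 ≤ K1)
    (hV : ∀ i < s, ContDiff ℝ 2 (V i)) (hV1 : ∀ i < s, ∀ x, jacSup (V i) x ≤ K1)
    (hsmall : K1 * Ap * H * d * s * 2 ^ s ≤ 1) :
    ∀ i < s, ∀ x, jacSup (rkStage V a H i) x ≤ 2 * K1 := by
  intro i hi x
  set c := K1 * Ap * H * d
  have hc : 0 ≤ c := by have := (abs_nonneg _).trans (ha 0 0); positivity
  have hs : (1 : ℝ) ≤ s := by exact_mod_cast Nat.zero_lt_of_lt hi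
  have h2s : (1 : ℝ) ≤ 2 ^ s := one_le_pow₀ one_le_two
  have hc2s : c * 2 ^ s ≤ 1 := by nlinarith [mul_nonneg hc (zero_le_one.trans h2s)]
  have hc1 : c ≤ 1 := by nlinarith
  calc jacSup (rkStage V a H i) x
      ≤ K1 * (1 + c) ^ i := jacSup_rkStage_le hH ha hK1 hV hV1 i hi x
    _ ≤ K1 * (1 + c) ^ s := by gcongr; linarith
    _ ≤ K1 * (1 - c + c * 2 ^ s) := by gcongr; exact one_add_pow_le hc hc1 s
    _ ≤ 2 * K1 := by nlinarith

end Stages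

theorem stmt_9_general {d s : ℕ} (H : ℝ) (hH : 0 < H)
    (Ap Bp K1 K2 : ℝ) (hK1 : 0 < K1) (hK2 : 0 < K2)
    (V : ℕ → E d → E d) (hV : ∀ j < s, ContDiff ℝ 2 (V j))
    (a : ℕ → ℕ → ℝ) (b : ℕ → ℝ)
    (ha : ∀ j k, |a j k| ≤ Ap) (hb : ∀ j, |b j| ≤ Bp)
    (hV1 : ∀ j < s, ∀ x, jacSup (V j) x ≤ K1)
    (hV2 : ∀ j < s, ∀ x, jac2Sup (V j) x ≤ K2) :
    (∀ x : E d, ∑ i ∈ Finset.range s, jacSup (rkStage V a H i) x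
        ≤ s * K1 * (1 + K1 * Ap * H * d) ^ (s - 1)) ∧
    (∀ x : E d, ∑ i ∈ Finset.range s, jac2Sup (rkStage V a H i) x
        ≤ 2 * K2 * s ^ 3 * (1 + K1 * Ap * H * d) ^ (2 * s)) ∧
    (∀ x : E d, jac2Sup
          (fun y => y + H • ∑ j ∈ Finset.range s, b j • rkStage V a H j y) x
        ≤ 2 * H * Bp * K2 * s ^ 3 * (1 + K1 * Ap * H * d) ^ (2 * s)) ∧
    (K1 * Ap * H * d * s * 2 ^ s ≤ 1 →
      ∀ i < s, ∀ x : E d, jacSup (rkStage V a H i) x ≤ 2 * K1) := by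
  set c := K1 * Ap * H * d
  have hc : 0 ≤ c := by have := (abs_nonneg _).trans (ha 0 0); positivity
  have hsum2 (x : E d) : ∑ k ∈ range s, jac2Sup (rkStage V a H k) x
      ≤ 2 * K2 * s ^ 3 * (1 + c) ^ (2 * s) := by
    have hs3 : (s : ℝ) ≤ 2 * s ^ 3 := by
      exact_mod_cast (Nat.le_self_pow three_ne_zero s).trans (Nat.le_mul_of_pos_left _ two_pos)
    have hX : 0 ≤ K2 * (1 + c) ^ (2 * s) := by positivity
    nlinarith [sum_jac2Sup_rkStage_le hH.le ha hK1.le hK2.le hV hV1 hV2 (a := a) x s le_rfl,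
      mul_le_mul_of_nonneg_left hs3 hX]
  refine ⟨fun x => ?_, hsum2, fun x => ?_, jacSup_rkStage_le_two_mul hH.le ha hK1.le hV hV1⟩
  · calc ∑ i ∈ range s, jacSup (rkStage V a H i) x
        ≤ ∑ _i ∈ range s, K1 * (1 + c) ^ (s - 1) :=
          Finset.sum_le_sum fun i hi => (jacSup_rkStage_le hH.le ha hK1.le hV hV1 i
            (mem_range.mp hi) x).trans <| mul_le_mul_of_nonneg_left (pow_le_pow_right₀
              (le_add_of_nonneg_right hc) (Nat.le_sub_one_of_lt (mem_range.mp hi))) hK1.le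
      _ = s * K1 * (1 + c) ^ (s - 1) := by simp [mul_assoc]
  · have hBp : 0 ≤ Bp := (abs_nonneg _).trans (hb 0)
    calc _ ≤ H * Bp * ∑ j ∈ range s, jac2Sup (rkStage V a H j) x :=
          jac2Sup_add_smul_sum_le hH.le hb fun j hj => contDiff_rkStage hV j (mem_range.mp hj)
      _ ≤ H * Bp * (2 * K2 * s ^ 3 * (1 + c) ^ (2 * s)) := by gcongr; exact hsum2 x
      _ = 2 * H * Bp * K2 * s ^ 3 * (1 + c) ^ (2 * s) := by ring

/-- entrywise bounds on first and second derivatives of the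
Runge–Kutta stages (stated for a generic family of fields, hence covering both
the approximate fields `V̂` and the true fields `V`). -/
theorem stmt_9 {d s : ℕ} (hd : 0 < d) (hs : 0 < s) (H : ℝ) (hH : 0 < H)
    (Ap Bp K1 K2 : ℝ) (hAp : 1 ≤ Ap) (hBp : 1 ≤ Bp) (hK1 : 0 < K1) (hK2 : 0 < K2)
    (V : ℕ → E d → E d) (hV : ∀ j < s, ContDiff ℝ 2 (V j))
    (a : ℕ → ℕ → ℝ) (b : ℕ → ℝ)
    (ha : ∀ j k, |a j k| ≤ Ap) (hb : ∀ j, |b j| ≤ Bp)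
    (hV1 : ∀ j < s, ∀ x, jacSup (V j) x ≤ K1)
    (hV2 : ∀ j < s, ∀ x, jac2Sup (V j) x ≤ K2) :
    (∀ x : E d, ∑ i ∈ Finset.range s, jacSup (rkStage V a H i) x
        ≤ s * K1 * (1 + K1 * Ap * H * d) ^ (s - 1)) ∧
    (∀ x : E d, ∑ i ∈ Finset.range s, jac2Sup (rkStage V a H i) x
        ≤ 2 * K2 * s ^ 3 * (1 + K1 * Ap * H * d) ^ (2 * s)) ∧
    (∀ x : E d, jac2Sup
          (fun y => y + H • ∑ j ∈ Finset.range s, b j • rkStage V a H j y) x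
        ≤ 2 * H * Bp * K2 * s ^ 3 * (1 + K1 * Ap * H * d) ^ (2 * s)) ∧
    (K1 * Ap * H * d * s * 2 ^ s ≤ 1 →
      ∀ i < s, ∀ x : E d, jacSup (rkStage V a H i) x ≤ 2 * K1) :=
  stmt_9_general H hH Ap Bp K1 K2 hK1 hK2 V hV a b ha hb hV1 hV2
end

section
/- Let the stages k̄_1, …, k̄_s be defined recursively by k̄_1(x) = V_{t+c_1H}(x) and k̄_j(x) = V_{t+c_jH}(x + H Σ_{k<j} a_{jk} k̄_k(x)), where V_u(x) = x + ∇log q_{T−u}(x) is the true reverse velocity field and t + H ≤ T − τ. Then for all x ∈ ℝ^d: Σ_{i=1}^s ‖k̄_i(x)‖_∞ ≤ s τ^{−1} (1 + 2τ^{−1} A_p H)^{s−1} [D + 2‖x‖_∞] and Σ_{i=1}^s ‖k̄_i(x)‖₂ ≤ 2s τ^{−1} (1 + 2τ^{−1} A_p H)^{s−1} [√d D + ‖x‖₂]. Moreover, if H A_p 2^s s τ^{−1} ≤ 1, then for each i ∈ {1, …, s}: ‖k̄_i(x)‖_∞ ≤ 4τ^{−1}(‖x‖_∞ + D) and ‖k̄_i(x)‖₂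 ≤ 4τ^{−1}(‖x‖₂ + √d D). -/
open MeasureTheory

/-- The ℓ^∞ (coordinatewise maximum) norm on ℝ^d. -/
noncomputable def supNorm {d : ℕ} (v : E d) : ℝ := ⨆ i, |v i|

/-- The density `q_t` of the OU process at time `t > 0` started from `μ`. -/
noncomputable def ouDensity {d : ℕ} (μ : Measure (E d)) (t : ℝ) (y : E d) : ℝ :=
  ∫ x, (2 * Real.pi * (1 - Real.exp (-(2 * t)))) ^ (-(d : ℝ) / 2) *
      Real.exp (-‖y - Real.exp (-t) • x‖ ^ 2 / (2 * (1 - Real.exp (-(2 * t))))) ∂μ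

/-!
By Tweedie's formula, `∇ log q_r(x) = σ_r⁻² (λ_r m_r(x) - x)`, where `m_r(x)` is the mean of `μ*`
tilted by the Gaussian likelihood `a ↦ exp (-‖x - λ_r a‖² / (2 σ_r²))`. Hence
`V(x) = (1 - σ_r⁻²) x + σ_r⁻² λ_r m_r(x)`: the posterior mean is an average of points of `K*`, so
its coordinates are bounded by `D - 1`, and both coefficients are at most `(2r)⁻¹ ≤ (2τ)⁻¹`
because `e^{2r} - 1 ≥ 2r` and `e^r - e^{-r} ≥ 2r`. So `V` grows at most linearly,
`‖V y‖ ≤ b + 2τ⁻¹ ‖y‖`, in the sup norm as in the Euclidean norm. In the Runge–Kutta recursion this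
gives `‖k̄_j‖ ≤ B + β ∑_{i<j} ‖k̄_i‖` with `β = 2τ⁻¹ A_p H`, and a discrete Grönwall argument bounds
the partial sums by `n B (1 + β)^(n-1)`. The step-size condition forces `β s (1 + β)^(s-1) ≤ 1`,
and then each stage is at most `2B`.
-/

open Real ContinuousLinearMap Finset

section GaussianMixture

variable {F : Type*} [NormedAddCommGroup F] [InnerProductSpace ℝ F] {l s : ℝ}

noncomputable def gaussLogKernel (l s : ℝ) (y a : F) : ℝ := -‖y - l • a‖ ^ 2 / (2 * s)

@[fun_prop]
lemma continuous_gaussLogKernel (y : F) : Continuous (gaussLogKernel l s y) := by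
  unfold gaussLogKernel; fun_prop

lemma exp_gaussLogKernel_le_one (hs : 0 < s) (y a : F) : exp (gaussLogKernel l s y a) ≤ 1 :=
  exp_le_one_iff.2 <| div_nonpos_of_nonpos_of_nonneg (neg_nonpos.2 (sq_nonneg _)) (by positivity)

lemma hasFDerivAt_exp_gaussLogKernel (a y : F) :
    HasFDerivAt (fun y => exp (gaussLogKernel l s y a))
      (innerSL ℝ (exp (gaussLogKernel l s y a) • s⁻¹ • (l • a - y))) y := by
  have hg : ∀ y, gaussLogKernel l s y a = -(2 * s)⁻¹ * ‖y - l • a‖ ^ 2 := fun y => by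
    rw [gaussLogKernel]; ring
  simp only [hg]
  refine (((hasFDerivAt_id y).sub_const (l • a)).norm_sq.const_mul (-(2 * s)⁻¹)).exp.congr_fderiv ?_
  ext v
  simp only [mul_inv_rev, id_eq, neg_mul, map_sub, map_smul, ContinuousLinearMap.comp_id,
    neg_smul, smul_neg, neg_apply, smul_apply, sub_apply, coe_innerSL_apply, smul_eq_mul,
    nsmul_eq_mul, Nat.cast_ofNat]
  ring

lemma norm_exp_gaussLogKernel_smul_le (hs : 0 < s) (y a : F) :
    ‖exp (gaussLogKernel l s y a) • s⁻¹ • (l • a - y)‖ ≤ s⁻¹ * (|l| * ‖a‖ + ‖y‖) := by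
  rw [norm_smul, norm_smul, norm_of_nonneg (exp_pos _).le, norm_of_nonneg (inv_pos.2 hs).le]
  calc exp (gaussLogKernel l s y a) * (s⁻¹ * ‖l • a - y‖) ≤ 1 * (s⁻¹ * (|l| * ‖a‖ + ‖y‖)) := by
        gcongr
        · exact exp_gaussLogKernel_le_one hs y a
        · exact (norm_sub_le _ _).trans_eq (by rw [norm_smul, norm_eq_abs])
    _ = s⁻¹ * (|l| * ‖a‖ + ‖y‖) := one_mul _

variable [MeasurableSpace F] {μ : Measure F}

noncomputable def gaussMixture (μ : Measure F) (l s : ℝ) (y : F) : ℝ :=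
  ∫ a, exp (gaussLogKernel l s y a) ∂μ

/-- The mean of `X ~ μ` given `l • X + √s • Z = y`, for `Z` standard Gaussian independent of `X`. -/
noncomputable def posteriorMean (μ : Measure F) (l s : ℝ) (y : F) : F :=
  ∫ a, a ∂μ.tilted (gaussLogKernel l s y)

lemma posteriorMean_eq (y : F) :
    posteriorMean μ l s y
      = (gaussMixture μ l s y)⁻¹ • ∫ a, exp (gaussLogKernel l s y a) • a ∂μ := by
  rw [posteriorMean, integral_tilted, ← integral_smul]
  simp_rw [smul_smul, div_eq_inv_mul]
  rfl

variable [BorelSpace F]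

lemma integrable_exp_gaussLogKernel [IsFiniteMeasure μ] (hs : 0 < s) (y : F) :
    Integrable (fun a => exp (gaussLogKernel l s y a)) μ :=
  Integrable.of_bound (continuous_exp.comp (continuous_gaussLogKernel y)).aestronglyMeasurable 1
    (.of_forall fun a => by
      rw [norm_of_nonneg (exp_pos _).le]; exact exp_gaussLogKernel_le_one hs y a)

lemma gaussMixture_pos [IsFiniteMeasure μ] [NeZero μ] (hs : 0 < s) (y : F) :
    0 < gaussMixture μ l s y :=
  integral_exp_pos (integrable_exp_gaussLogKernel hs y)

variable [FiniteDimensional ℝ F] {R : ℝ}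

lemma integrable_exp_gaussLogKernel_smul [IsFiniteMeasure μ] (hs : 0 < s)
    (hR : ∀ᵐ a ∂μ, ‖a‖ ≤ R) (y : F) :
    Integrable (fun a => exp (gaussLogKernel l s y a) • s⁻¹ • (l • a - y)) μ := by
  refine Integrable.of_bound (by fun_prop : Continuous _).aestronglyMeasurable
    (s⁻¹ * (|l| * R + ‖y‖)) ?_
  filter_upwards [hR] with a ha
  exact (norm_exp_gaussLogKernel_smul_le hs y a).trans (by gcongr)

lemma hasFDerivAt_gaussMixture [IsFiniteMeasure μ] (hs : 0 < s) (hR : ∀ᵐ a ∂μ, ‖a‖ ≤ R)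
    (x : F) :
    HasFDerivAt (gaussMixture μ l s)
      (innerSL ℝ (∫ a, exp (gaussLogKernel l s x a) • s⁻¹ • (l • a - x) ∂μ)) x := by
  rw [← (innerSL ℝ).integral_comp_comm (integrable_exp_gaussLogKernel_smul hs hR x)]
  refine hasFDerivAt_integral_of_dominated_of_fderiv_le (Metric.ball_mem_nhds x one_pos)
    (bound := fun _ => s⁻¹ * (|l| * R + (‖x‖ + 1)))
    (.of_forall fun y => (continuous_exp.comp (continuous_gaussLogKernel y)).aestronglyMeasurable)
    (integrable_exp_gaussLogKernel hs x)
    ((innerSL ℝ).continuous.comp (by fun_prop)).aestronglyMeasurable ?_ (integrable_const _)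
    (.of_forall fun a y _ => hasFDerivAt_exp_gaussLogKernel a y)
  filter_upwards [hR] with a ha y hy
  rw [innerSL_apply_norm]
  refine (norm_exp_gaussLogKernel_smul_le hs y a).trans ?_
  have : ‖y‖ ≤ ‖x‖ + 1 := by
    linarith [norm_le_norm_add_norm_sub' y x, mem_ball_iff_norm.1 hy]
  gcongr

lemma integral_exp_gaussLogKernel_smul [IsFiniteMeasure μ] [NeZero μ] (hs : 0 < s)
    (hR : ∀ᵐ a ∂μ, ‖a‖ ≤ R) (x : F) :
    ∫ a, exp (gaussLogKernel l s x a) • s⁻¹ • (l • a - x) ∂μ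
      = (s⁻¹ * gaussMixture μ l s x) • (l • posteriorMean μ l s x - x) := by
  have hZ := (gaussMixture_pos (l := l) (μ := μ) hs x).ne'
  have hint : Integrable (fun a => exp (gaussLogKernel l s x a) • a) μ := by
    refine Integrable.of_bound (by fun_prop : Continuous _).aestronglyMeasurable R ?_
    filter_upwards [hR] with a ha
    rw [norm_smul, norm_of_nonneg (exp_pos _).le]
    exact (mul_le_of_le_one_left (norm_nonneg a) (exp_gaussLogKernel_le_one hs x a)).trans ha
  calc ∫ a, exp (gaussLogKernel l s x a) • s⁻¹ • (l • a - x) ∂μ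
      = ∫ a, s⁻¹ • (l • (exp (gaussLogKernel l s x a) • a)
          - exp (gaussLogKernel l s x a) • x) ∂μ := by
        congr with a; module
    _ = s⁻¹ • (l • ∫ a, exp (gaussLogKernel l s x a) • a ∂μ - gaussMixture μ l s x • x) := by
        have hint' : Integrable (fun a => l • (exp (gaussLogKernel l s x a) • a)) μ := hint.smul l
        rw [integral_smul, integral_sub hint' ((integrable_exp_gaussLogKernel hs x).smul_const x),
          integral_smul, integral_smul_const, gaussMixture]
    _ = _ := by
        rw [posteriorMean_eq]
        match_scalars <;> field_simp

lemma hasGradientAt_log_gaussMixture [IsFiniteMeasure μ] [NeZero μ] (hs : 0 < s)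
    (hR : ∀ᵐ a ∂μ, ‖a‖ ≤ R) (x : F) :
    HasGradientAt (fun y => log (gaussMixture μ l s y))
      (s⁻¹ • (l • posteriorMean μ l s x - x)) x := by
  rw [hasGradientAt_iff_hasFDerivAt]
  refine ((hasFDerivAt_gaussMixture hs hR x).log (gaussMixture_pos hs x).ne').congr_fderiv ?_
  ext v
  rw [integral_exp_gaussLogKernel_smul hs hR]
  have hZ := (gaussMixture_pos (μ := μ) (l := l) hs x).ne'
  simp only [map_smul, map_sub, smul_apply, sub_apply, coe_innerSL_apply, smul_eq_mul,
    InnerProductSpace.toDual_apply_apply]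
  field_simp

lemma abs_apply_posteriorMean_le [IsFiniteMeasure μ] [NeZero μ] (hs : 0 < s) (L : F →L[ℝ] ℝ)
    {B : ℝ} (hL : ∀ᵐ a ∂μ, |L a| ≤ B) (y : F) : |L (posteriorMean μ l s y)| ≤ B := by
  have := isProbabilityMeasure_tilted (integrable_exp_gaussLogKernel (μ := μ) (l := l) hs y)
  have hLν : ∀ᵐ a ∂μ.tilted (gaussLogKernel l s y), ‖L a‖ ≤ B :=
    tilted_absolutelyContinuous μ _ hL
  by_cases hint : Integrable (fun a => a) (μ.tilted (gaussLogKernel l s y))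
  · rw [posteriorMean, ← L.integral_comp_comm hint, ← norm_eq_abs]
    simpa using norm_integral_le_of_norm_le_const hLν
  · obtain ⟨a, ha⟩ := hL.exists
    rw [posteriorMean, integral_undef hint, map_zero, abs_zero]
    exact (abs_nonneg _).trans ha

end GaussianMixture

section SupNorm

variable {d : ℕ}

noncomputable def supSeminorm (d : ℕ) : Seminorm ℝ (E d) :=
  (normSeminorm ℝ (Fin d → ℝ)).comp (WithLp.linearEquiv 2 ℝ (Fin d → ℝ)).toLinearMap

lemma abs_apply_le_supNorm (v : E d) (i : Fin d) : |v i| ≤ supNorm v :=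
  le_ciSup (f := fun j => |v j|) (Set.finite_range _).bddAbove i

lemma supNorm_nonneg (v : E d) : 0 ≤ supNorm v :=
  Real.iSup_nonneg fun _ => abs_nonneg _

lemma supNorm_le_of_forall_abs_le {v : E d} {B : ℝ} (hB : 0 ≤ B) (h : ∀ i, |v i| ≤ B) :
    supNorm v ≤ B :=
  Real.iSup_le h hB

lemma supSeminorm_apply (v : E d) : supSeminorm d v = supNorm v :=
  le_antisymm
    ((pi_norm_le_iff_of_nonneg (supNorm_nonneg v)).2
      fun i => abs_apply_le_supNorm v i)
    (supNorm_le_of_forall_abs_le (norm_nonneg (WithLp.ofLp v))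
      fun i => norm_le_pi_norm (WithLp.ofLp v) i)

lemma continuous_supNorm : Continuous (supNorm : E d → ℝ) := by
  have : (supNorm : E d → ℝ) = fun v => ‖WithLp.ofLp v‖ :=
    funext fun v => (supSeminorm_apply v).symm
  rw [this]
  exact continuous_norm.comp (PiLp.continuous_ofLp 2 _)

lemma norm_le_sqrt_mul_supNorm (v : E d) : ‖v‖ ≤ √d * supNorm v := by
  simpa [supNorm, EuclideanSpace.inner_single_left] using
    (EuclideanSpace.basisFun (Fin d) ℝ).norm_le_card_mul_iSup_norm_inner v

lemma supNorm_le_iSup_of_mem {K : Set (E d)} (hK : IsCompact K) {v : E d} (hv : v ∈ K) :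
    supNorm v ≤ ⨆ x : K, supNorm (x : E d) := by
  refine le_ciSup (f := fun x : K => supNorm (x : E d)) ?_ ⟨v, hv⟩
  simpa [Set.image_eq_range] using hK.bddAbove_image continuous_supNorm.continuousOn

variable {μ : Measure (E d)} {l s B : ℝ}

lemma supNorm_posteriorMean_le [IsFiniteMeasure μ] [NeZero μ] (hs : 0 < s)
    (hB : ∀ᵐ a ∂μ, supNorm a ≤ B) (y : E d) : supNorm (posteriorMean μ l s y) ≤ B := by
  obtain ⟨a, ha⟩ := hB.exists
  refine supNorm_le_of_forall_abs_le ((supNorm_nonneg a).trans ha) fun i => ?_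
  exact abs_apply_posteriorMean_le hs (EuclideanSpace.proj i)
    (hB.mono fun a ha => (abs_apply_le_supNorm a i).trans ha) y

lemma ae_supNorm_le_iSup {K : Set (E d)} (hK : IsCompact K)
    (hμK : μ Kᶜ = 0) : ∀ᵐ a ∂μ, supNorm a ≤ ⨆ x : K, supNorm (x : E d) := by
  filter_upwards [mem_ae_iff.2 hμK] with a ha
  exact supNorm_le_iSup_of_mem hK ha

end SupNorm

section OrnsteinUhlenbeck

variable {d : ℕ} {μ : Measure (E d)} {r τ R B : ℝ}

lemma one_sub_exp_neg_two_mul_pos (hr : 0 < r) : 0 < 1 - exp (-(2 * r)) :=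
  sub_pos.2 (exp_lt_one_iff.2 (by linarith))

lemma inv_one_sub_exp_neg_two_mul_sub_one_le (hr : 0 < r) :
    (1 - exp (-(2 * r)))⁻¹ - 1 ≤ (2 * r)⁻¹ := by
  have h2r : 2 * r + 1 ≤ exp (2 * r) := add_one_le_exp _
  have hσ := one_sub_exp_neg_two_mul_pos hr
  have key : (1 - exp (-(2 * r)))⁻¹ - 1 = (exp (2 * r) - 1)⁻¹ := by
    have hE : 0 < exp (2 * r) - 1 := by linarith
    rw [exp_neg] at hσ ⊢
    field_simp
    ring
  rw [key]
  exact inv_anti₀ (by positivity) (by linarith)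

lemma inv_one_sub_exp_neg_two_mul_mul_exp_neg_le (hr : 0 < r) :
    (1 - exp (-(2 * r)))⁻¹ * exp (-r) ≤ (2 * r)⁻¹ := by
  have hsinh : 2 * r < exp r - exp (-r) := by
    have := self_lt_sinh_iff.2 hr
    rw [sinh_eq] at this
    linarith
  have hσ := one_sub_exp_neg_two_mul_pos hr
  have key : (1 - exp (-(2 * r)))⁻¹ * exp (-r) = (exp r - exp (-r))⁻¹ := by
    rw [show -(2 * r) = -r + -r by ring, exp_add] at hσ ⊢
    rw [exp_neg] at hσ ⊢
    field_simp
  rw [key]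
  exact inv_anti₀ (by positivity) hsinh.le

lemma ouDensity_eq_mul_gaussMixture (μ : Measure (E d)) (r : ℝ) :
    ouDensity μ r = fun y => (2 * π * (1 - exp (-(2 * r)))) ^ (-(d : ℝ) / 2) *
      gaussMixture μ (exp (-r)) (1 - exp (-(2 * r))) y := by
  funext y
  rw [ouDensity, gaussMixture, ← integral_const_mul]
  rfl

lemma gradient_log_ouDensity [IsFiniteMeasure μ] [NeZero μ] (hr : 0 < r)
    (hR : ∀ᵐ a ∂μ, ‖a‖ ≤ R) (x : E d) :
    gradient (fun y => log (ouDensity μ r y)) x = (1 - exp (-(2 * r)))⁻¹ •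
      (exp (-r) • posteriorMean μ (exp (-r)) (1 - exp (-(2 * r))) x - x) := by
  have hσ := one_sub_exp_neg_two_mul_pos hr
  have hC : 0 < (2 * π * (1 - exp (-(2 * r)))) ^ (-(d : ℝ) / 2) := by positivity
  have hlog : (fun y => log (ouDensity μ r y)) = fun y =>
      log ((2 * π * (1 - exp (-(2 * r)))) ^ (-(d : ℝ) / 2)) +
        log (gaussMixture μ (exp (-r)) (1 - exp (-(2 * r))) y) := by
    funext y
    rw [ouDensity_eq_mul_gaussMixture, log_mul hC.ne' (gaussMixture_pos hσ y).ne']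
  rw [hlog]
  exact (hasGradientAt_iff_hasFDerivAt.2
    ((hasGradientAt_iff_hasFDerivAt.1 (hasGradientAt_log_gaussMixture hσ hR x)).const_add _)).gradient

lemma seminorm_add_gradient_log_ouDensity_le [IsFiniteMeasure μ] [NeZero μ]
    (p : Seminorm ℝ (E d)) (hτ : 0 < τ) (hτr : τ ≤ r) (hR : ∀ᵐ a ∂μ, ‖a‖ ≤ R) (x : E d) :
    p (x + gradient (fun y => log (ouDensity μ r y)) x)
      ≤ (2 * τ)⁻¹ * (p x + p (posteriorMean μ (exp (-r)) (1 - exp (-(2 * r))) x)) := by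
  have hr : 0 < r := hτ.trans_le hτr
  have hσ := one_sub_exp_neg_two_mul_pos hr
  have hrτ : (2 * r)⁻¹ ≤ (2 * τ)⁻¹ := inv_anti₀ (by positivity) (by linarith)
  have hσ1 : 1 ≤ (1 - exp (-(2 * r)))⁻¹ := one_le_inv₀ hσ |>.2 (by linarith [exp_pos (-(2 * r))])
  set m := posteriorMean μ (exp (-r)) (1 - exp (-(2 * r))) x
  have hV : x + gradient (fun y => log (ouDensity μ r y)) x
      = (1 - (1 - exp (-(2 * r)))⁻¹) • x + ((1 - exp (-(2 * r)))⁻¹ * exp (-r)) • m := by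
    rw [gradient_log_ouDensity hr hR]
    module
  rw [hV]
  refine (map_add_le_add p _ _).trans ?_
  rw [map_smul_eq_mul, map_smul_eq_mul, norm_eq_abs, norm_eq_abs, abs_of_nonpos (by linarith),
    abs_of_pos (by positivity), mul_add]
  gcongr
  · linarith [inv_one_sub_exp_neg_two_mul_sub_one_le hr]
  · exact (inv_one_sub_exp_neg_two_mul_mul_exp_neg_le hr).trans hrτ

lemma norm_le_of_ae_supNorm_le (hB : ∀ᵐ a ∂μ, supNorm a ≤ B) : ∀ᵐ a ∂μ, ‖a‖ ≤ √d * B :=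
  hB.mono fun a ha => (norm_le_sqrt_mul_supNorm a).trans (by gcongr)

lemma supNorm_add_gradient_log_ouDensity_le [IsFiniteMeasure μ] [NeZero μ] (hτ : 0 < τ)
    (hτr : τ ≤ r) (hB : ∀ᵐ a ∂μ, supNorm a ≤ B) (x : E d) :
    supNorm (x + gradient (fun y => log (ouDensity μ r y)) x) ≤ (2 * τ)⁻¹ * (supNorm x + B) := by
  simp only [← supSeminorm_apply]
  refine (seminorm_add_gradient_log_ouDensity_le _ hτ hτr (norm_le_of_ae_supNorm_le hB) x).trans ?_
  gcongr
  rw [supSeminorm_apply]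
  exact supNorm_posteriorMean_le (one_sub_exp_neg_two_mul_pos (hτ.trans_le hτr)) hB x

lemma norm_add_gradient_log_ouDensity_le [IsFiniteMeasure μ] [NeZero μ] (hτ : 0 < τ)
    (hτr : τ ≤ r) (hB : ∀ᵐ a ∂μ, supNorm a ≤ B) (x : E d) :
    ‖x + gradient (fun y => log (ouDensity μ r y)) x‖ ≤ (2 * τ)⁻¹ * (‖x‖ + √d * B) := by
  refine (seminorm_add_gradient_log_ouDensity_le (normSeminorm ℝ (E d)) hτ hτr
    (norm_le_of_ae_supNorm_le hB) x).trans ?_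
  simp only [coe_normSeminorm]
  gcongr
  exact (norm_le_sqrt_mul_supNorm _).trans
    (by gcongr; exact supNorm_posteriorMean_le (one_sub_exp_neg_two_mul_pos (hτ.trans_le hτr)) hB x)

end OrnsteinUhlenbeck

section DiscreteGronwall

variable {u : ℕ → ℝ} {B β : ℝ}

lemma sum_range_le_of_le_add_mul_sum (hu₀ : ∀ j, 0 ≤ u j) (hβ : 0 ≤ β)
    (hu : ∀ j, u j ≤ B + β * ∑ i ∈ range j, u i) (n : ℕ) :
    ∑ i ∈ range n, u i ≤ n * B * (1 + β) ^ (n - 1) := by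
  have hB : 0 ≤ B := by simpa using (hu₀ 0).trans (hu 0)
  suffices ∀ n : ℕ, ∑ i ∈ range (n + 1), u i ≤ (n + 1) * B * (1 + β) ^ n by
    cases n with
    | zero => simp
    | succ n => simpa using this n
  intro n
  induction n with
  | zero => simpa using hu 0
  | succ n ih =>
    have hpow : 1 ≤ (1 + β) ^ (n + 1) := one_le_pow₀ (by linarith)
    calc ∑ i ∈ range (n + 2), u i = ∑ i ∈ range (n + 1), u i + u (n + 1) := sum_range_succ _ _
      _ ≤ (1 + β) * ∑ i ∈ range (n + 1), u i + B := by linarith [hu (n + 1)]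
      _ ≤ (1 + β) * ((n + 1) * B * (1 + β) ^ n) + B := by gcongr
      _ = (n + 1) * B * (1 + β) ^ (n + 1) + B := by ring
      _ ≤ (n + 1) * B * (1 + β) ^ (n + 1) + B * (1 + β) ^ (n + 1) := by
          gcongr; exact le_mul_of_one_le_right hB hpow
      _ = (↑(n + 1) + 1) * B * (1 + β) ^ (n + 1) := by push_cast; ring

lemma le_two_mul_of_le_add_mul_sum (hu₀ : ∀ j, 0 ≤ u j) (hβ : 0 ≤ β)
    (hu : ∀ j, u j ≤ B + β * ∑ i ∈ range j, u i) {n : ℕ}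
    (hsmall : β * n * (1 + β) ^ (n - 1) ≤ 1) {i : ℕ} (hi : i < n) : u i ≤ 2 * B := by
  have hB : 0 ≤ B := by simpa using (hu₀ 0).trans (hu 0)
  have hsum : ∑ j ∈ range i, u j ≤ ∑ j ∈ range n, u j :=
    sum_le_sum_of_subset_of_nonneg (range_subset_range.2 hi.le) fun j _ _ => hu₀ j
  calc u i ≤ B + β * ∑ j ∈ range n, u j := (hu i).trans (by gcongr)
    _ ≤ B + β * (n * B * (1 + β) ^ (n - 1)) := by
        gcongr; exact sum_range_le_of_le_add_mul_sum hu₀ hβ hu n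
    _ = B + (β * n * (1 + β) ^ (n - 1)) * B := by ring
    _ ≤ 2 * B := by nlinarith

lemma mul_mul_one_add_pow_le_one (hβ : 0 ≤ β) {n : ℕ} (h : β * n * 2 ^ n ≤ 2) :
    β * n * (1 + β) ^ (n - 1) ≤ 1 := by
  cases n with
  | zero => simp
  | succ n =>
    simp only [Nat.add_sub_cancel, pow_succ] at h ⊢
    have h2n : (1 : ℝ) ≤ 2 ^ n := one_le_pow₀ one_le_two
    have hβ1 : β ≤ 1 := by
      have : β * 2 ≤ β * ((n + 1) * 2 ^ n * 2) := by gcongr; nlinarith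
      push_cast at h; linarith
    calc β * ↑(n + 1) * (1 + β) ^ n ≤ β * ↑(n + 1) * 2 ^ n := by gcongr; linarith
      _ ≤ 1 := by linarith

end DiscreteGronwall

section RungeKutta

variable {d : ℕ} (p : Seminorm ℝ (E d)) {V : ℕ → E d → E d} {a : ℕ → ℕ → ℝ} {H A b γ : ℝ}

lemma rkStage_le (hH : 0 ≤ H) (ha : ∀ j k, |a j k| ≤ A) (hγ : 0 ≤ γ)
    (hV : ∀ j y, p (V j y) ≤ b + γ * p y) (x : E d) (j : ℕ) :
    p (rkStage V a H j x)
      ≤ (b + γ * p x) + γ * A * H * ∑ i ∈ range j, p (rkStage V a H i x) := by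
  have hsum : p (∑ k : Fin j, a j k • rkStage V a H k x)
      ≤ A * ∑ i ∈ range j, p (rkStage V a H i x) := by
    refine (le_sum_of_subadditive p (map_zero p).le (map_add_le_add p) _ _).trans ?_
    rw [mul_sum, ← Fin.sum_univ_eq_sum_range]
    gcongr with k
    rw [map_smul_eq_mul, norm_eq_abs]
    exact mul_le_mul_of_nonneg_right (ha j k) (apply_nonneg p _)
  have harg : p (x + H • ∑ k : Fin j, a j k • rkStage V a H k x)
      ≤ p x + H * (A * ∑ i ∈ range j, p (rkStage V a H i x)) := by
    refine (map_add_le_add p _ _).trans ?_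
    rw [map_smul_eq_mul, norm_eq_abs, abs_of_nonneg hH]
    gcongr
  rw [rkStage]
  refine (hV j _).trans ?_
  nlinarith [mul_le_mul_of_nonneg_left harg hγ]

lemma sum_rkStage_le (hH : 0 ≤ H) (ha : ∀ j k, |a j k| ≤ A) (hγ : 0 ≤ γ)
    (hV : ∀ j y, p (V j y) ≤ b + γ * p y) (x : E d) (n : ℕ) :
    ∑ i ∈ range n, p (rkStage V a H i x) ≤ n * (b + γ * p x) * (1 + γ * A * H) ^ (n - 1) :=
  sum_range_le_of_le_add_mul_sum (fun _ => apply_nonneg p _)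
    (by have := (abs_nonneg _).trans (ha 0 0); positivity) (rkStage_le p hH ha hγ hV x) n

lemma rkStage_le_two_mul (hH : 0 ≤ H) (ha : ∀ j k, |a j k| ≤ A) (hγ : 0 ≤ γ)
    (hV : ∀ j y, p (V j y) ≤ b + γ * p y) (x : E d) {n : ℕ}
    (hsmall : γ * A * H * n * (1 + γ * A * H) ^ (n - 1) ≤ 1) {i : ℕ} (hi : i < n) :
    p (rkStage V a H i x) ≤ 2 * (b + γ * p x) :=
  le_two_mul_of_le_add_mul_sum (fun _ => apply_nonneg p _)
    (by have := (abs_nonneg _).trans (ha 0 0); positivity) (rkStage_le p hH ha hγ hV x) hsmall hi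

end RungeKutta

theorem stmt_11_general {d s : ℕ}
    (μ : Measure (E d)) (hμ : IsProbabilityMeasure μ)
    (Ks : Set (E d)) (hK : IsCompact Ks) (hsupp : μ Ksᶜ = 0)
    (D : ℝ) (hD : D = 1 + (⨆ x : Ks, supNorm (x : E d)))
    (T τ t H : ℝ) (hτ : τ ∈ Set.Ioo (0 : ℝ) 1) (hH : 0 < H)
    (htH : t + H ≤ T - τ)
    (Ap : ℝ) (a : ℕ → ℕ → ℝ) (ha : ∀ j k, |a j k| ≤ Ap)
    (c : ℕ → ℝ) (hc : ∀ j, c j ∈ Set.Icc (0 : ℝ) 1)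
    (barV : ℕ → E d → E d)
    (hbarV : barV = fun j x =>
      x + gradient (fun y => Real.log (ouDensity μ (T - (t + c j * H)) y)) x) :
    (∀ x : E d, ∑ i ∈ Finset.range s, supNorm (rkStage barV a H i x)
        ≤ s * τ⁻¹ * (1 + 2 * τ⁻¹ * Ap * H) ^ (s - 1) * (D + 2 * supNorm x)) ∧
    (∀ x : E d, ∑ i ∈ Finset.range s, ‖rkStage barV a H i x‖
        ≤ 2 * s * τ⁻¹ * (1 + 2 * τ⁻¹ * Ap * H) ^ (s - 1) * (Real.sqrt d * D + ‖x‖)) ∧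
    (H * Ap * 2 ^ s * s * τ⁻¹ ≤ 1 →
      ∀ i < s, ∀ x : E d,
        supNorm (rkStage barV a H i x) ≤ 4 * τ⁻¹ * (supNorm x + D) ∧
        ‖rkStage barV a H i x‖ ≤ 4 * τ⁻¹ * (‖x‖ + Real.sqrt d * D)) := by
  have hτ₀ : 0 < τ := hτ.1
  have hD₀ : 0 ≤ D := by linarith [Real.iSup_nonneg fun x : Ks => supNorm_nonneg (x : E d)]
  have hsupp' : ∀ᵐ a ∂μ, supNorm a ≤ D - 1 := by simpa [hD] using ae_supNorm_le_iSup hK hsupp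
  have hτr : ∀ j, τ ≤ T - (t + c j * H) := fun j => by nlinarith [(hc j).2]
  have hVsup : ∀ j y, supSeminorm d (barV j y) ≤ τ⁻¹ * D + 2 * τ⁻¹ * supSeminorm d y := by
    intro j y
    have hV := supNorm_add_gradient_log_ouDensity_le hτ₀ (hτr j) hsupp' y
    rw [mul_inv] at hV
    simp only [hbarV, supSeminorm_apply]
    have : 0 ≤ τ⁻¹ * supNorm y := by have := supNorm_nonneg y; positivity
    nlinarith [inv_pos.2 hτ₀]
  have hVnorm : ∀ j y, ‖barV j y‖ ≤ 2 * τ⁻¹ * (√d * D) + 2 * τ⁻¹ * ‖y‖ := by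
    intro j y
    have hV := norm_add_gradient_log_ouDensity_le hτ₀ (hτr j) hsupp' y
    rw [mul_inv] at hV
    simp only [hbarV]
    have : 0 ≤ τ⁻¹ * ‖y‖ := by positivity
    have : 0 ≤ τ⁻¹ * √d := by positivity
    nlinarith
  have hγ : 0 ≤ 2 * τ⁻¹ := by positivity
  have hβ : 0 ≤ 2 * τ⁻¹ * Ap * H := by have := (abs_nonneg _).trans (ha 0 0); positivity
  refine ⟨fun x => ?_, fun x => ?_, fun hsmall i hi x => ?_⟩
  · have := sum_rkStage_le _ hH.le ha hγ hVsup x s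
    simp only [supSeminorm_apply] at this
    exact this.trans_eq (by ring)
  · have := sum_rkStage_le (normSeminorm ℝ (E d)) hH.le ha hγ hVnorm x s
    simp only [coe_normSeminorm] at this
    exact this.trans_eq (by ring)
  have hsmall' := mul_mul_one_add_pow_le_one hβ (n := s) (by linarith)
  have hsup := rkStage_le_two_mul _ hH.le ha hγ hVsup x hsmall' hi
  have hnorm := rkStage_le_two_mul (normSeminorm ℝ (E d)) hH.le ha hγ hVnorm x hsmall' hi
  simp only [supSeminorm_apply, coe_normSeminorm] at hsup hnorm
  have : 0 ≤ τ⁻¹ * D := by positivity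
  exact ⟨by linarith, hnorm.trans_eq (by ring)⟩

/-- sup-norm and Euclidean-norm growth bounds for the Runge–Kutta
stages built from the true reverse velocity field
`V_u(x) = x + ∇ log q_{T-u}(x)` of the OU process. -/
theorem stmt_11 {d s : ℕ} (hd : 0 < d) (hs : 0 < s)
    (μ : Measure (E d)) (hμ : IsProbabilityMeasure μ)
    (Ks : Set (E d)) (hK : IsCompact Ks) (hsupp : μ Ksᶜ = 0)
    (D : ℝ) (hD : D = 1 + (⨆ x : Ks, supNorm (x : E d)))
    (T τ t H : ℝ) (hτ : τ ∈ Set.Ioo (0 : ℝ) 1) (ht : 0 ≤ t) (hH : 0 < H)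
    (htH : t + H ≤ T - τ)
    (Ap : ℝ) (hAp : 1 ≤ Ap) (a : ℕ → ℕ → ℝ) (ha : ∀ j k, |a j k| ≤ Ap)
    (c : ℕ → ℝ) (hc : ∀ j, c j ∈ Set.Icc (0 : ℝ) 1)
    (barV : ℕ → E d → E d)
    (hbarV : barV = fun j x =>
      x + gradient (fun y => Real.log (ouDensity μ (T - (t + c j * H)) y)) x) :
    (∀ x : E d, ∑ i ∈ Finset.range s, supNorm (rkStage barV a H i x)
        ≤ s * τ⁻¹ * (1 + 2 * τ⁻¹ * Ap * H) ^ (s - 1) * (D + 2 * supNorm x)) ∧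
    (∀ x : E d, ∑ i ∈ Finset.range s, ‖rkStage barV a H i x‖
        ≤ 2 * s * τ⁻¹ * (1 + 2 * τ⁻¹ * Ap * H) ^ (s - 1) * (Real.sqrt d * D + ‖x‖)) ∧
    (H * Ap * 2 ^ s * s * τ⁻¹ ≤ 1 →
      ∀ i < s, ∀ x : E d,
        supNorm (rkStage barV a H i x) ≤ 4 * τ⁻¹ * (supNorm x + D) ∧
        ‖rkStage barV a H i x‖ ≤ 4 * τ⁻¹ * (‖x‖ + Real.sqrt d * D)) :=
  stmt_11_general μ hμ Ks hK hsupp D hD T τ t H hτ hH htH Ap a ha c hc barV hbarV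
end

section
/- Let φ_h be the flow of the field V: ∂_h φ_h(x) = V_{t+h}(φ_h(x)) with φ_0(x) = x, where for all h ∈ [0,H] and x ∈ ℝ^d: ‖V_{t+h}(x)‖₂ ≤ W̄⁽⁰⁾ + W̄⁽¹⁾‖x‖₂, ‖∇V_{t+h}(x)‖_op ≤ L̄⁽¹⁾ and ‖∇V_{t+h}(x)‖_∞ ≤ K̄⁽¹⁾. If H(W̄⁽¹⁾ + L̄⁽¹⁾ + dK̄⁽¹⁾) < 1/100, then for every h ≤ H and x ∈ ℝ^d: ‖x − φ_h(x)‖₂ ≤ 4h(W̄⁽⁰⁾ + W̄⁽¹⁾‖x‖₂) and ‖x − φ_h^{−1}(x)‖₂ ≤ 8h(W̄⁽⁰⁾ + W̄⁽¹⁾‖x‖₂); ‖∇φ_h(x) − I_d‖_op ≤ 4L̄⁽¹⁾h and ‖(∇φ_h^{−1})(x) − I_d‖_op ≤ 8L̄⁽¹⁾h; ‖∇φ_h(x) − I_d‖_∞ ≤ 2K̄⁽¹⁾h and ‖(∇φ_h^{−1})(x) − I_d‖_∞ ≤ 4K̄⁽¹⁾h; and 0 < e^{−8K̄⁽¹⁾hd}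 ≤ det[∇φ_h(x)] ≤ e^{4K̄⁽¹⁾hd} and 0 < e^{−4K̄⁽¹⁾hd} ≤ det[∇φ_h^{−1}(x)] ≤ e^{8K̄⁽¹⁾hd}. -/
/-- Jacobian matrix of `F` at `x` (row `q`, column `l` is `∂_l F^{(q)}(x)`). -/
noncomputable def jacMatrix {d : ℕ} (F : E d → E d) (x : E d) :
    Matrix (Fin d) (Fin d) ℝ :=
  fun q l => jacEntry F x l q

/-!
Each estimate is Grönwall's inequality along the flow. The displacement `φ_u x - x`, the
deviation `φ_u a - φ_u b - (a - b)` of the flow from a translation, and the coordinates of that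
deviation (in the sup norm) obey linear differential inequalities with rates `W̄⁽¹⁾`, `L̄⁽¹⁾` and
`d K̄⁽¹⁾`, so over the short horizon they are at most twice their first-order values. Hence `φ_h`
is a small Lipschitz perturbation of the identity: a bijection whose derivative is close to the
identity in operator norm and entrywise. The derivative of the inverse is the inverse of a
near-identity operator (matrix), and the determinant is controlled by expanding `det (1 + M)`
into principal minors, the `k × k` ones being at most `k! εᵏ`, so that
`|det (1 + M) - 1| ≤ dε / (1 - dε)` when the entries of `M` are at most `ε`.
-/

open Set Finset

theorem gronwallBound_zero_le_two_mul {K c x : ℝ} (hK : 0 ≤ K) (hc : 0 ≤ c) (hx : 0 ≤ x)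
    (hKx : K * x ≤ 1) : gronwallBound 0 K c x ≤ 2 * c * x := by
  rcases hK.eq_or_lt with rfl | hK
  · simp only [gronwallBound_K0]
    nlinarith
  · have hKx0 : 0 ≤ K * x := by positivity
    have hexp : Real.exp (K * x) - 1 ≤ 2 * (K * x) := by
      have := Real.abs_exp_sub_one_le (x := K * x) (by rwa [abs_of_nonneg hKx0])
      rw [abs_of_nonneg hKx0] at this
      exact (abs_le.mp this).2
    rw [gronwallBound_of_K_ne_0 hK.ne']
    calc 0 * Real.exp (K * x) + c / K * (Real.exp (K * x) - 1) ≤ c / K * (2 * (K * x)) := by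
          rw [zero_mul, zero_add]; gcongr
      _ = 2 * c * x := by field_simp

theorem norm_le_two_mul_of_norm_deriv_le {G : Type*} [NormedAddCommGroup G] [NormedSpace ℝ G]
    {f f' : ℝ → G} {K c T : ℝ} (hK : 0 ≤ K) (hc : 0 ≤ c) (hT : 0 ≤ T) (hKT : K * T ≤ 1)
    (hf : ∀ u ∈ Icc 0 T, HasDerivAt f (f' u) u) (hf0 : f 0 = 0)
    (bound : ∀ u ∈ Ico 0 T, ‖f' u‖ ≤ K * ‖f u‖ + c) : ‖f T‖ ≤ 2 * c * T := by
  have := norm_le_gronwallBound_of_norm_deriv_right_le (δ := 0)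
    (fun u hu => (hf u hu).continuousAt.continuousWithinAt)
    (fun u hu => (hf u (Ico_subset_Icc_self hu)).hasDerivWithinAt) (by simp [hf0]) bound
    T ⟨hT, le_rfl⟩
  rw [sub_zero] at this
  exact this.trans (gronwallBound_zero_le_two_mul hK hc hT hKT)

namespace Matrix

open scoped Nat
variable {n : Type*} [Fintype n] [DecidableEq n]

theorem det_one_add_eq_sum_principal_minors (M : Matrix n n ℝ) :
    det (1 + M) = ∑ k ∈ range (Fintype.card n + 1), ∑ s ∈ univ.powersetCard k,
      (M.submatrix (Subtype.val : s → n) Subtype.val).det := by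
  set p : Polynomial ℝ := det (1 + (Polynomial.X : Polynomial ℝ) • M.map Polynomial.C)
  have hdeg : p.natDegree < Fintype.card n + 1 := by
    rw [Nat.lt_succ_iff, Polynomial.natDegree_le_iff_coeff_eq_zero]
    intro N hN
    rw [coeff_det_one_add_X_smul_eq_sum_minors, powersetCard_eq_empty.mpr (by simpa using hN),
      sum_empty]
  have heval : p.eval 1 = det (1 + M) := by
    rw [← Polynomial.coe_evalRingHom, RingHom.map_det]
    congr 1
    ext i j
    simp [Matrix.one_apply, apply_ite]
  rw [← heval, Polynomial.eval_eq_sum_range' hdeg]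
  simp [p, coeff_det_one_add_X_smul_eq_sum_minors]

theorem abs_det_one_add_sub_one_le (M : Matrix n n ℝ) {ε : ℝ} (hε : 0 ≤ ε)
    (hM : ∀ i j, |M i j| ≤ ε) (hu : Fintype.card n * ε < 1) :
    |det (1 + M) - 1| ≤ Fintype.card n * ε / (1 - Fintype.card n * ε) := by
  set d := Fintype.card n
  set u : ℝ := d * ε
  have hminor : ∀ s : Finset n,
      |(M.submatrix (Subtype.val : s → n) Subtype.val).det| ≤ (#s)! * ε ^ #s := by
    intro s
    simpa using det_le (A := M.submatrix (Subtype.val : s → n) Subtype.val)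
      (abv := AbsoluteValue.abs) (fun i j => hM i j)
  have hk : ∀ k, ∑ s ∈ univ.powersetCard k, |(M.submatrix (Subtype.val : s → n) Subtype.val).det|
      ≤ u ^ k := by
    intro k
    calc _ ≤ ∑ s ∈ univ.powersetCard k, ((k ! : ℝ) * ε ^ k) := by
          refine sum_le_sum fun s hs => ?_
          rw [← (mem_powersetCard.mp hs).2]
          exact hminor s
      _ = (d.descFactorial k : ℝ) * ε ^ k := by
          rw [sum_const, card_powersetCard, Finset.card_univ, nsmul_eq_mul,
            Nat.descFactorial_eq_factorial_mul_choose]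
          push_cast
          ring
      _ ≤ u ^ k := by
          rw [mul_pow]
          gcongr
          exact_mod_cast Nat.descFactorial_le_pow d k
  rw [det_one_add_eq_sum_principal_minors, sum_range_succ', powersetCard_zero, sum_singleton,
    det_isEmpty, add_sub_cancel_right]
  calc _ ≤ ∑ k ∈ range d, u ^ (k + 1) :=
        (abs_sum_le_sum_abs _ _).trans <| sum_le_sum fun k _ =>
          (abs_sum_le_sum_abs _ _).trans (hk (k + 1))
    _ = u * ∑ k ∈ Ico 0 d, u ^ k := by
        rw [mul_sum, range_eq_Ico]; exact sum_congr rfl fun k _ => by ring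
    _ ≤ u * (u ^ 0 / (1 - u)) := by
        gcongr; exact geom_sum_Ico_le_of_lt_one (by positivity) hu
    _ = u / (1 - u) := by ring

theorem det_pos_and_exp_bounds (A : Matrix n n ℝ) {ε : ℝ} (hε : 0 ≤ ε)
    (hA : ∀ i j, |A i j - (1 : Matrix n n ℝ) i j| ≤ ε) (hu : Fintype.card n * ε ≤ 1 / 4) :
    0 < A.det ∧ Real.exp (-(4 * (Fintype.card n * ε))) ≤ A.det ∧
      A.det ≤ Real.exp (2 * (Fintype.card n * ε)) := by
  set u : ℝ := Fintype.card n * ε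
  have hu0 : 0 ≤ u := by positivity
  have hdet : |A.det - 1| ≤ 2 * u := by
    have := abs_det_one_add_sub_one_le (A - 1) hε (fun i j => hA i j) (by linarith)
    rw [add_sub_cancel] at this
    refine this.trans ?_
    rw [div_le_iff₀ (by linarith)]
    nlinarith
  obtain ⟨hlow, hupp⟩ := abs_le.mp hdet
  have hexp : Real.exp (-(4 * u)) ≤ 1 - 2 * u := by
    have h4 : 1 + 4 * u ≤ Real.exp (4 * u) := by linarith [Real.add_one_le_exp (4 * u)]
    rw [Real.exp_neg, inv_le_iff_one_le_mul₀ (Real.exp_pos _)]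
    nlinarith
  refine ⟨by linarith, by linarith, ?_⟩
  linarith [Real.add_one_le_exp (2 * u)]

theorem abs_sub_one_apply_le_of_mul_eq_one {M N : Matrix n n ℝ} (hNM : N * M = 1) {ε : ℝ}
    (hε : 0 ≤ ε) (hM : ∀ i j, |M i j - (1 : Matrix n n ℝ) i j| ≤ ε)
    (hu : Fintype.card n * ε ≤ 1 / 2) (i j : n) : |N i j - (1 : Matrix n n ℝ) i j| ≤ 2 * ε := by
  set R := ∑ k, |N i k|
  have hN : ∀ j, |N i j - (1 : Matrix n n ℝ) i j| ≤ ε * R := by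
    intro j
    have hsub : N - 1 = N * (1 - M) := by rw [Matrix.mul_sub, hNM, Matrix.mul_one]
    rw [← sub_apply, hsub, mul_apply, mul_sum]
    refine (abs_sum_le_sum_abs _ _).trans (sum_le_sum fun k _ => ?_)
    rw [abs_mul, mul_comm ε, sub_apply, abs_sub_comm]
    exact mul_le_mul_of_nonneg_left (hM k j) (abs_nonneg _)
  have hR : R ≤ 2 := by
    have hrow : R ≤ 1 + Fintype.card n * (ε * R) := by
      calc R ≤ ∑ k, (|(1 : Matrix n n ℝ) i k| + ε * R) :=
            sum_le_sum fun k _ => by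
              linarith [abs_sub_abs_le_abs_sub (N i k) ((1 : Matrix n n ℝ) i k), hN k]
        _ = 1 + Fintype.card n * (ε * R) := by
            simp [sum_add_distrib, Matrix.one_apply, abs_ite]
    have hR0 : 0 ≤ R := sum_nonneg fun k _ => abs_nonneg _
    nlinarith
  nlinarith [hN j]

theorem det_pos_and_exp_bounds_of_mul_eq_one {M N : Matrix n n ℝ} (hNM : N * M = 1) {ε : ℝ}
    (hε : 0 ≤ ε) (hM : ∀ i j, |M i j - (1 : Matrix n n ℝ) i j| ≤ ε)
    (hu : Fintype.card n * ε ≤ 1 / 4) :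
    0 < N.det ∧ Real.exp (-(2 * (Fintype.card n * ε))) ≤ N.det ∧
      N.det ≤ Real.exp (4 * (Fintype.card n * ε)) := by
  obtain ⟨hpos, hlow, hupp⟩ := det_pos_and_exp_bounds M hε hM hu
  have hinv : N.det = M.det⁻¹ := eq_inv_of_mul_eq_one_left (by rw [← det_mul, hNM, det_one])
  rw [hinv]
  refine ⟨inv_pos.mpr hpos, ?_, ?_⟩
  · rw [Real.exp_neg]
    exact inv_anti₀ hpos hupp
  · rw [← neg_neg (4 * _), Real.exp_neg]
    exact inv_anti₀ (Real.exp_pos _) hlow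

end Matrix

theorem norm_sub_one_le_of_mul_eq_one {R : Type*} [NormedRing R] {s t : R} (hts : t * s = 1)
    (h1 : ‖(1 : R)‖ ≤ 1) {ε : ℝ} (hs : ‖s - 1‖ ≤ ε) (hε : ε ≤ 1 / 2) : ‖t - 1‖ ≤ 2 * ε := by
  have hsub : t - 1 = t * (1 - s) := by rw [mul_sub, mul_one, hts]
  have ht : ‖t‖ ≤ ‖t - 1‖ + 1 := by
    simpa using (norm_add_le (t - 1) 1).trans (by gcongr)
  have hle : ‖t - 1‖ ≤ (‖t - 1‖ + 1) * ε := by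
    calc ‖t - 1‖ ≤ ‖t‖ * ‖1 - s‖ := hsub ▸ norm_mul_le _ _
      _ ≤ (‖t - 1‖ + 1) * ε := by rw [norm_sub_rev]; gcongr
  nlinarith [norm_nonneg (s - 1)]

theorem norm_sub_invFun_le {F : Type*} [NormedAddCommGroup F] {f : F → F} {c : ℝ}
    (hsurj : Function.Surjective f) {a b : ℝ} (hb : 0 ≤ b)
    (hc : 0 ≤ c) (hcb : c * b ≤ 1 / 2) (hf : ∀ y, ‖f y - y‖ ≤ c * (a + b * ‖y‖)) (x : F) :
    ‖x - Function.invFun f x‖ ≤ 2 * c * (a + b * ‖x‖) := by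
  set y := Function.invFun f x
  have hfy : f y = x := Function.rightInverse_invFun hsurj x
  have hy : ‖y‖ ≤ ‖x‖ + ‖x - y‖ := by simpa using norm_sub_le x (x - y)
  have := hf y
  rw [hfy] at this
  nlinarith [mul_le_mul_of_nonneg_left hy (mul_nonneg hc hb), norm_nonneg (x - y), norm_nonneg x]

section NearIdentity

variable {F : Type*} [NormedAddCommGroup F] [NormedSpace ℝ F] {f : F → F} {c : ℝ}

theorem norm_fderiv_sub_id_le (hc : 0 ≤ c) (hf : ∀ a b, ‖f a - f b - (a - b)‖ ≤ c * ‖a - b‖)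
    {x : F} (hfx : DifferentiableAt ℝ f x) :
    ‖fderiv ℝ f x - ContinuousLinearMap.id ℝ F‖ ≤ c := by
  have hsub : fderiv ℝ (fun y => f y - y) x = fderiv ℝ f x - ContinuousLinearMap.id ℝ F :=
    (hfx.hasFDerivAt.sub (hasFDerivAt_id x)).fderiv
  rw [← hsub]
  refine norm_fderiv_le_of_lip' ℝ hc (Filter.Eventually.of_forall fun y => ?_)
  simpa [sub_sub_sub_comm] using hf y x

theorem bijective_of_norm_sub_sub_le [CompleteSpace F] (hc : c < 1)
    (hf : ∀ a b, ‖f a - f b - (a - b)‖ ≤ c * ‖a - b‖) : Function.Bijective f := by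
  have happrox : ApproximatesLinearOn f
      ((ContinuousLinearEquiv.refl ℝ F : F ≃L[ℝ] F) : F →L[ℝ] F) univ c.toNNReal :=
    fun a _ b _ => (hf a b).trans (by gcongr; exact c.le_coe_toNNReal)
  have hsmall : Subsingleton F ∨ c.toNNReal <
      ‖(((ContinuousLinearEquiv.refl ℝ F).symm : F ≃L[ℝ] F) : F →L[ℝ] F)‖₊⁻¹ := by
    rcases subsingleton_or_nontrivial F with hF | hF
    · exact Or.inl hF
    · right
      simpa [ContinuousLinearMap.nnnorm_id] using hc
  exact ⟨injOn_univ.mp (happrox.injOn hsmall), happrox.surjective hsmall⟩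

theorem fderiv_invFun_comp_fderiv [CompleteSpace F] (hf : ContDiff ℝ 1 f)
    (hbij : Function.Bijective f)
    (hDf : ∀ y, ‖fderiv ℝ f y - ContinuousLinearMap.id ℝ F‖ < 1) (x : F) :
    (fderiv ℝ (Function.invFun f) x).comp (fderiv ℝ f (Function.invFun f x)) =
      ContinuousLinearMap.id ℝ F := by
  set y := Function.invFun f x
  -- `fderiv f y = 1 - (1 - fderiv f y)` is a unit by the Neumann series.
  set A : F ≃L[ℝ] F := ContinuousLinearEquiv.unitsEquiv ℝ F
    (Units.oneSub (1 - fderiv ℝ f y) (by rw [norm_sub_rev]; exact hDf y))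
  have hA : (A : F →L[ℝ] F) = fderiv ℝ f y := by ext v; simp [A]
  have hstrict : HasStrictFDerivAt f (A : F →L[ℝ] F) y :=
    hA ▸ hf.contDiffAt.hasStrictFDerivAt one_ne_zero
  have hinv := hstrict.to_local_left_inverse
    (Filter.Eventually.of_forall (Function.leftInverse_invFun hbij.1))
  rw [Function.rightInverse_invFun hbij.2 x] at hinv
  rw [hinv.hasFDerivAt.fderiv, ← hA, ContinuousLinearEquiv.coe_symm_comp_coe]

theorem norm_fderiv_invFun_sub_id_le [CompleteSpace F] (hf : ContDiff ℝ 1 f)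
    (hbij : Function.Bijective f) (hDf : ∀ y, ‖fderiv ℝ f y - ContinuousLinearMap.id ℝ F‖ ≤ c)
    (hc : c ≤ 1 / 2) (x : F) :
    ‖fderiv ℝ (Function.invFun f) x - ContinuousLinearMap.id ℝ F‖ ≤ 2 * c :=
  norm_sub_one_le_of_mul_eq_one
    (fderiv_invFun_comp_fderiv hf hbij (fun y => (hDf y).trans_lt (by linarith)) x)
    ContinuousLinearMap.norm_id_le (hDf _) hc

end NearIdentity

section Flow

variable {F : Type*} [NormedAddCommGroup F] [NormedSpace ℝ F] {v φ : ℝ → F → F} {T : ℝ}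

theorem norm_flow_sub_le (hφ : ∀ x, ∀ u ∈ Icc 0 T, HasDerivAt (fun u => φ u x) (v u (φ u x)) u)
    (hφ0 : ∀ x, φ 0 x = x) {a b : ℝ} (ha : 0 ≤ a) (hb : 0 ≤ b)
    (hv : ∀ u ∈ Icc 0 T, ∀ y, ‖v u y‖ ≤ a + b * ‖y‖) (hT : 0 ≤ T) (hbT : b * T ≤ 1) (x : F) :
    ‖φ T x - x‖ ≤ 2 * T * (a + b * ‖x‖) := by
  have := norm_le_two_mul_of_norm_deriv_le (f := fun u => φ u x - x)
    (c := a + b * ‖x‖) hb (by positivity) hT hbT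
    (fun u hu => (hφ x u hu).sub_const x) (by simp [hφ0]) fun u hu => ?_
  · linarith
  · calc ‖v u (φ u x)‖ ≤ a + b * ‖φ u x - x + x‖ := by
          simpa using hv u (Ico_subset_Icc_self hu) (φ u x)
      _ ≤ b * ‖φ u x - x‖ + (a + b * ‖x‖) := by nlinarith [norm_add_le (φ u x - x) x]

theorem norm_flow_sub_flow_sub_le
    (hφ : ∀ x, ∀ u ∈ Icc 0 T, HasDerivAt (fun u => φ u x) (v u (φ u x)) u)
    (hφ0 : ∀ x, φ 0 x = x) {L : ℝ} (hL : 0 ≤ L)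
    (hv : ∀ u ∈ Icc 0 T, ∀ y z, ‖v u y - v u z‖ ≤ L * ‖y - z‖) (hT : 0 ≤ T) (hLT : L * T ≤ 1)
    (a b : F) : ‖φ T a - φ T b - (a - b)‖ ≤ 2 * L * T * ‖a - b‖ := by
  have := norm_le_two_mul_of_norm_deriv_le (f := fun u => φ u a - φ u b - (a - b))
    (c := L * ‖a - b‖) hL (by positivity) hT hLT
    (fun u hu => ((hφ a u hu).sub (hφ b u hu)).sub_const (a - b))
    (by simp [hφ0]) fun u hu => ?_
  · linarith
  · calc ‖v u (φ u a) - v u (φ u b)‖ ≤ L * ‖φ u a - φ u b - (a - b) + (a - b)‖ := by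
          simpa using hv u (Ico_subset_Icc_self hu) (φ u a) (φ u b)
      _ ≤ L * ‖φ u a - φ u b - (a - b)‖ + L * ‖a - b‖ := by
          nlinarith [norm_add_le (φ u a - φ u b - (a - b)) (a - b)]

end Flow

theorem abs_flow_sub_flow_sub_apply_le {d : ℕ} {v φ : ℝ → E d → E d} {T : ℝ}
    (hφ : ∀ x, ∀ u ∈ Icc 0 T, HasDerivAt (fun u => φ u x) (v u (φ u x)) u)
    (hφ0 : ∀ x, φ 0 x = x) {K : ℝ} (hK : 0 ≤ K)
    (hv : ∀ u ∈ Icc 0 T, ∀ y z q, |(v u y - v u z) q| ≤ K * ∑ j, |(y - z) j|) (hT : 0 ≤ T)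
    (hKT : d * K * T ≤ 1) (a b : E d) (q : Fin d) :
    |(φ T a - φ T b - (a - b)) q| ≤ 2 * K * T * ∑ j, |(a - b) j| := by
  -- Grönwall for the coordinates in the sup norm, where the rate becomes `d * K`.
  set e := PiLp.continuousLinearEquiv 2 ℝ (fun _ : Fin d => ℝ)
  set S := ∑ j, |(a - b) j|
  have hsup : ∀ w : E d, ∀ j, |w j| ≤ ‖e w‖ := fun w j => norm_le_pi_norm (e w) j
  have := norm_le_two_mul_of_norm_deriv_le (f := fun u => e (φ u a - φ u b - (a - b)))
    (by positivity : 0 ≤ d * K) (by positivity : 0 ≤ K * S) hT hKT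
    (fun u hu => e.hasFDerivAt.comp_hasDerivAt u
      (((hφ a u hu).sub (hφ b u hu)).sub_const (a - b)))
    (by simp [hφ0]) fun u hu => ?_
  · calc _ ≤ ‖e (φ T a - φ T b - (a - b))‖ := hsup _ q
      _ ≤ _ := by linarith
  · set w := φ u a - φ u b - (a - b)
    refine (pi_norm_le_iff_of_nonneg (by positivity)).mpr fun j => ?_
    calc |(v u (φ u a) - v u (φ u b)) j| ≤ K * ∑ k, |(w + (a - b)) k| := by
          simpa [w] using hv u (Ico_subset_Icc_self hu) (φ u a) (φ u b) j
      _ ≤ K * ∑ k, (‖e w‖ + |(a - b) k|) := by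
          gcongr with k
          exact (abs_add_le (w k) ((a - b) k)).trans (by linarith [hsup w k])
      _ = d * K * ‖e w‖ + K * S := by
          simp [sum_add_distrib, S]; ring

section Jacobian

variable {d : ℕ}

theorem jacMatrix_eq_toMatrix (f : E d → E d) (x : E d) :
    jacMatrix f x = LinearMap.toMatrix (EuclideanSpace.basisFun (Fin d) ℝ).toBasis
      (EuclideanSpace.basisFun (Fin d) ℝ).toBasis (fderiv ℝ f x) := by
  ext q l
  simp [jacMatrix, jacEntry, LinearMap.toMatrix_apply]

theorem jacMatrix_mul_eq_one {f g : E d → E d} {x y : E d}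
    (h : (fderiv ℝ g x).comp (fderiv ℝ f y) = ContinuousLinearMap.id ℝ (E d)) :
    jacMatrix g x * jacMatrix f y = 1 := by
  rw [jacMatrix_eq_toMatrix, jacMatrix_eq_toMatrix, ← LinearMap.toMatrix_comp]
  change LinearMap.toMatrix _ _ ((fderiv ℝ g x).comp (fderiv ℝ f y) : E d →ₗ[ℝ] E d) = 1
  rw [h, ContinuousLinearMap.coe_id, LinearMap.toMatrix_id]

theorem jacMatrix_sub_one_apply (f : E d → E d) (x : E d) (q l : Fin d) :
    jacMatrix f x q l - (1 : Matrix (Fin d) (Fin d) ℝ) q l =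
      jacEntry f x l q - if l = q then 1 else 0 := by
  simp [jacMatrix, Matrix.one_apply, eq_comm]

theorem ContinuousLinearMap.apply_eq_sum_mul_apply_single (T : E d →L[ℝ] E d) (w : E d)
    (q : Fin d) : T w q = ∑ j, w j * T (EuclideanSpace.single j 1) q := by
  conv_lhs => rw [← (EuclideanSpace.basisFun (Fin d) ℝ).sum_repr w]
  simp [map_sum]

theorem abs_apply_sub_apply_le {f : E d → E d} (hf : Differentiable ℝ f) {K : ℝ}
    (hK : ∀ x l q, |jacEntry f x l q| ≤ K) (a b : E d) (q : Fin d) :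
    |(f a - f b) q| ≤ K * ∑ j, |(a - b) j| := by
  set w := a - b
  have hderiv : ∀ τ : ℝ,
      HasDerivAt (fun τ => f (b + τ • w) q) (fderiv ℝ f (b + τ • w) w q) τ := by
    intro τ
    have hline : HasDerivAt (fun τ : ℝ => b + τ • w) w τ := by
      simpa using ((hasDerivAt_id τ).smul_const w).const_add b
    exact (EuclideanSpace.proj q).hasFDerivAt.comp_hasDerivAt τ
      ((hf _).hasFDerivAt.comp_hasDerivAt τ hline)
  have hbound : ∀ z, ‖fderiv ℝ f z w q‖ ≤ K * ∑ j, |w j| := by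
    intro z
    rw [ContinuousLinearMap.apply_eq_sum_mul_apply_single, Real.norm_eq_abs, mul_sum]
    refine (abs_sum_le_sum_abs _ _).trans (sum_le_sum fun j _ => ?_)
    rw [abs_mul, mul_comm K]
    exact mul_le_mul_of_nonneg_left (hK z j q) (abs_nonneg _)
  have := norm_image_sub_le_of_norm_deriv_le_segment_01' (fun τ _ => (hderiv τ).hasDerivWithinAt)
    (fun τ _ => hbound _)
  simpa [w] using this

theorem abs_jacEntry_sub_le {f : E d → E d} {c : ℝ} (hc : 0 ≤ c)
    (hf : ∀ a b q, |(f a - f b - (a - b)) q| ≤ c * ∑ j, |(a - b) j|) {x : E d}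
    (hfx : DifferentiableAt ℝ f x) (l q : Fin d) :
    |jacEntry f x l q - if l = q then 1 else 0| ≤ c := by
  set e : E d := EuclideanSpace.single l 1
  have hderiv : HasDerivAt (fun s : ℝ => (f (x + s • e) - (x + s • e)) q)
      (jacEntry f x l q - if l = q then 1 else 0) 0 := by
    have hline : HasDerivAt (fun s : ℝ => x + s • e) e 0 := by
      simpa using ((hasDerivAt_id (0 : ℝ)).smul_const e).const_add x
    have hfx' : HasFDerivAt f (fderiv ℝ f x) (x + (0 : ℝ) • e) := by simpa using hfx.hasFDerivAt
    refine ((EuclideanSpace.proj q).hasFDerivAt.comp_hasDerivAt (0 : ℝ)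
      ((hfx'.comp_hasDerivAt 0 hline).sub hline)).congr_deriv ?_
    simp [jacEntry, e, eq_comm]
  rw [← hderiv.deriv, ← Real.norm_eq_abs]
  refine norm_deriv_le_of_lip' hc (Filter.Eventually.of_forall fun s => ?_)
  have he : ∑ j, |e j| = 1 := by simp [e, abs_ite]
  simpa [← mul_sum, he, sub_sub_sub_comm] using hf (x + s • e) x q

end Jacobian

theorem stmt_14_general {d : ℕ}
    (t H : ℝ)
    (V : ℝ → E d → E d)
    (hVsm : ∀ h ∈ Set.Icc (0 : ℝ) H, ContDiff ℝ 1 (V (t + h)))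
    (W0 W1 L1 K1 : ℝ) (hW0 : 0 < W0) (hW1 : 0 < W1) (hL1 : 0 < L1) (hK1 : 0 < K1)
    (hV0 : ∀ h ∈ Set.Icc (0 : ℝ) H, ∀ x, ‖V (t + h) x‖ ≤ W0 + W1 * ‖x‖)
    (hV1 : ∀ h ∈ Set.Icc (0 : ℝ) H, ∀ x, ‖fderiv ℝ (V (t + h)) x‖ ≤ L1)
    (hV1' : ∀ h ∈ Set.Icc (0 : ℝ) H, ∀ x l q, |jacEntry (V (t + h)) x l q| ≤ K1)
    (φ : ℝ → E d → E d)
    (hφ0 : ∀ x, φ 0 x = x)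
    (hφ : ∀ x, ∀ h ∈ Set.Icc (0 : ℝ) H,
      HasDerivAt (fun u => φ u x) (V (t + h) (φ h x)) h)
    (hφsm : ∀ h ∈ Set.Icc (0 : ℝ) H, ContDiff ℝ 1 (φ h))
    (hsmall : H * (W1 + L1 + d * K1) < 1 / 100) :
    ∀ h ∈ Set.Icc (0 : ℝ) H, Function.Bijective (φ h) ∧ ∀ x : E d,
      ‖x - φ h x‖ ≤ 4 * h * (W0 + W1 * ‖x‖) ∧
      ‖x - Function.invFun (φ h) x‖ ≤ 8 * h * (W0 + W1 * ‖x‖) ∧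
      ‖fderiv ℝ (φ h) x - ContinuousLinearMap.id ℝ (E d)‖ ≤ 4 * L1 * h ∧
      ‖fderiv ℝ (Function.invFun (φ h)) x - ContinuousLinearMap.id ℝ (E d)‖ ≤ 8 * L1 * h ∧
      (∀ l q, |jacEntry (φ h) x l q - (if l = q then 1 else 0)| ≤ 2 * K1 * h) ∧
      (∀ l q, |jacEntry (Function.invFun (φ h)) x l q - (if l = q then 1 else 0)| ≤ 4 * K1 * h) ∧
      (0 < (jacMatrix (φ h) x).det ∧
        Real.exp (-(8 * K1 * h * d)) ≤ (jacMatrix (φ h) x).det ∧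
        (jacMatrix (φ h) x).det ≤ Real.exp (4 * K1 * h * d)) ∧
      (0 < (jacMatrix (Function.invFun (φ h)) x).det ∧
        Real.exp (-(4 * K1 * h * d)) ≤ (jacMatrix (Function.invFun (φ h)) x).det ∧
        (jacMatrix (Function.invFun (φ h)) x).det ≤ Real.exp (8 * K1 * h * d)) := by
  rintro h ⟨hh0, hhH⟩
  have hIcc : ∀ u ∈ Icc 0 h, u ∈ Icc 0 H := fun u hu => ⟨hu.1, hu.2.trans hhH⟩
  have hrates : W1 * h + L1 * h + d * K1 * h < 1 / 100 := by
    nlinarith [mul_le_mul_of_nonneg_right hhH (by positivity : (0 : ℝ) ≤ W1 + L1 + d * K1)]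
  have hW1h : 0 ≤ W1 * h := by positivity
  have hL1h : 0 ≤ L1 * h := by positivity
  have hK1h : 0 ≤ d * K1 * h := by positivity
  have hflow : ∀ x, ∀ u ∈ Icc 0 h, HasDerivAt (fun u => φ u x) (V (t + u) (φ u x)) u :=
    fun x u hu => hφ x u (hIcc u hu)
  have hVdiff : ∀ u ∈ Icc 0 h, Differentiable ℝ (V (t + u)) :=
    fun u hu => (hVsm u (hIcc u hu)).differentiable one_ne_zero
  have hf : ContDiff ℝ 1 (φ h) := hφsm h ⟨hh0, hhH⟩
  have hdisp := norm_flow_sub_le hflow hφ0 hW0.le hW1.le (fun u hu => hV0 u (hIcc u hu)) hh0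
    (by linarith)
  have happrox := norm_flow_sub_flow_sub_le hflow hφ0 hL1.le
    (fun u hu y z => convex_univ.norm_image_sub_le_of_norm_fderiv_le (fun w _ => hVdiff u hu w)
      (fun w _ => hV1 u (hIcc u hu) w) (mem_univ z) (mem_univ y)) hh0 (by linarith)
  have hcoord := abs_flow_sub_flow_sub_apply_le hflow hφ0 hK1.le
    (fun u hu => abs_apply_sub_apply_le (hVdiff u hu) (hV1' u (hIcc u hu))) hh0 (by linarith)
  have hbij := bijective_of_norm_sub_sub_le (by linarith) happrox
  have hDf y := norm_fderiv_sub_id_le (by positivity) happrox (hf.differentiable one_ne_zero y)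
  have hJf y := abs_jacEntry_sub_le (by positivity) hcoord (hf.differentiable one_ne_zero y)
  have hJf' : ∀ y q l,
      |jacMatrix (φ h) y q l - (1 : Matrix (Fin d) (Fin d) ℝ) q l| ≤ 2 * K1 * h :=
    fun y q l => (jacMatrix_sub_one_apply _ _ q l).symm ▸ hJf y l q
  have hJinv x := jacMatrix_mul_eq_one
    (fderiv_invFun_comp_fderiv hf hbij (fun y => (hDf y).trans_lt (by linarith)) x)
  have hdK : (Fintype.card (Fin d) : ℝ) * (2 * K1 * h) ≤ 1 / 4 := by
    rw [Fintype.card_fin]; linarith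
  refine ⟨hbij, fun x => ⟨?_, ?_, ?_, ?_, hJf x, fun l q => ?_, ?_, ?_⟩⟩
  · rw [norm_sub_rev]
    nlinarith [hdisp x, norm_nonneg x]
  · nlinarith [norm_sub_invFun_le hbij.2 hW1.le (by positivity) (by linarith) hdisp x,
      norm_nonneg x]
  · nlinarith [hDf x]
  · nlinarith [norm_fderiv_invFun_sub_id_le hf hbij hDf (by linarith) x]
  · rw [← jacMatrix_sub_one_apply]
    nlinarith [Matrix.abs_sub_one_apply_le_of_mul_eq_one (hJinv x) (by positivity) (hJf' _)
      (by linarith) q l]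
  · convert Matrix.det_pos_and_exp_bounds _ (by positivity) (hJf' x) hdK using 4 <;>
      simp only [Fintype.card_fin] <;> ring
  · convert Matrix.det_pos_and_exp_bounds_of_mul_eq_one (hJinv x) (by positivity) (hJf' _) hdK
      using 4 <;> simp only [Fintype.card_fin] <;> ring

/-- growth estimates for the flow `φ_h` of the time-dependent
velocity field `V_{t+h}` and its inverse. -/
theorem stmt_14 {d : ℕ} (hd : 0 < d)
    (t H : ℝ) (hH : 0 < H)
    (V : ℝ → E d → E d)
    (hVsm : ∀ h ∈ Set.Icc (0 : ℝ) H, ContDiff ℝ 1 (V (t + h)))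
    (W0 W1 L1 K1 : ℝ) (hW0 : 0 < W0) (hW1 : 0 < W1) (hL1 : 0 < L1) (hK1 : 0 < K1)
    (hV0 : ∀ h ∈ Set.Icc (0 : ℝ) H, ∀ x, ‖V (t + h) x‖ ≤ W0 + W1 * ‖x‖)
    (hV1 : ∀ h ∈ Set.Icc (0 : ℝ) H, ∀ x, ‖fderiv ℝ (V (t + h)) x‖ ≤ L1)
    (hV1' : ∀ h ∈ Set.Icc (0 : ℝ) H, ∀ x l q, |jacEntry (V (t + h)) x l q| ≤ K1)
    (φ : ℝ → E d → E d)
    (hφ0 : ∀ x, φ 0 x = x)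
    (hφ : ∀ x, ∀ h ∈ Set.Icc (0 : ℝ) H,
      HasDerivAt (fun u => φ u x) (V (t + h) (φ h x)) h)
    (hφsm : ∀ h ∈ Set.Icc (0 : ℝ) H, ContDiff ℝ 1 (φ h))
    (hsmall : H * (W1 + L1 + d * K1) < 1 / 100) :
    ∀ h ∈ Set.Icc (0 : ℝ) H, Function.Bijective (φ h) ∧ ∀ x : E d,
      ‖x - φ h x‖ ≤ 4 * h * (W0 + W1 * ‖x‖) ∧
      ‖x - Function.invFun (φ h) x‖ ≤ 8 * h * (W0 + W1 * ‖x‖) ∧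
      ‖fderiv ℝ (φ h) x - ContinuousLinearMap.id ℝ (E d)‖ ≤ 4 * L1 * h ∧
      ‖fderiv ℝ (Function.invFun (φ h)) x - ContinuousLinearMap.id ℝ (E d)‖ ≤ 8 * L1 * h ∧
      (∀ l q, |jacEntry (φ h) x l q - (if l = q then 1 else 0)| ≤ 2 * K1 * h) ∧
      (∀ l q, |jacEntry (Function.invFun (φ h)) x l q - (if l = q then 1 else 0)| ≤ 4 * K1 * h) ∧
      (0 < (jacMatrix (φ h) x).det ∧
        Real.exp (-(8 * K1 * h * d)) ≤ (jacMatrix (φ h) x).det ∧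
        (jacMatrix (φ h) x).det ≤ Real.exp (4 * K1 * h * d)) ∧
      (0 < (jacMatrix (Function.invFun (φ h)) x).det ∧
        Real.exp (-(4 * K1 * h * d)) ≤ (jacMatrix (Function.invFun (φ h)) x).det ∧
        (jacMatrix (Function.invFun (φ h)) x).det ≤ Real.exp (8 * K1 * h * d)) :=
  stmt_14_general t H V hVsm W0 W1 L1 K1 hW0 hW1 hL1 hK1 hV0 hV1 hV1' φ hφ0 hφ hφsm hsmall
end
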